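/- arXiv:2208.10699 — 5 statements merged into one kernel-verified Lean document; each statement's English description precedes it below -/
import Mathlib

section
/- Let F be a finite field with q = |F| elements and n ≥ 2. For every τ ∈ S_n, ∑_{σ ∈ S_n} q^{I(σ)} · |{T ∈ 𝒯 : T σ ∈ B τ B}| = q^{I(τ)} · |𝒯|, where σ and τ inside the matrix products denote permutation matrices. Equivalently, the Mallows distribution π_q(σ) = q^{I(σ)}/[n]_q! is stationary for the lumped transvection chain P(σ, τ) = |{T ∈ 𝒯 : T σ ∈ B τ B}| / |𝒯| on S_n. -/
/-- The set of transvections: matrices of the form `I + v aᵀ` with `a, v` nonzero vectors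
satisfying `aᵀ v = 0`. -/
def transvections (n : ℕ) (F : Type*) [Field F] : Set (Matrix (Fin n) (Fin n) F) :=
  {M | ∃ a v : Fin n → F, a ≠ 0 ∧ v ≠ 0 ∧ (∑ i, a i * v i) = 0 ∧
    M = 1 + Matrix.vecMulVec v a}

/-- The Borel subgroup of `GL_n(F)`, viewed as the set of invertible upper-triangular
`n × n` matrices. -/
def borelSubgroup (n : ℕ) (F : Type*) [Field F] : Set (Matrix (Fin n) (Fin n) F) :=
  {M | M.BlockTriangular id ∧ IsUnit M.det}

/-- The Bruhat double coset `B ω B` associated to the permutation `ω ∈ S_n`. -/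
def bruhatCell (n : ℕ) (F : Type*) [Field F] (ω : Equiv.Perm (Fin n)) :
    Set (Matrix (Fin n) (Fin n) F) :=
  {M | ∃ b₁ ∈ borelSubgroup n F, ∃ b₂ ∈ borelSubgroup n F, M = b₁ * ω.permMatrix F * b₂}

/-- `I(ω)`: the number of inversions of the permutation `ω ∈ S_n`. -/
def inversions (n : ℕ) (ω : Equiv.Perm (Fin n)) : ℕ :=
  (Finset.univ.filter fun p : Fin n × Fin n => p.1 < p.2 ∧ ω p.2 < ω p.1).card

open Matrix Finset Equiv
set_option linter.unusedSectionVars false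

namespace Mallows

variable {n : ℕ} {F : Type*} [Field F] [Fintype F]

lemma permMatrix_mul (σ : Perm (Fin n)) (M : Matrix (Fin n) (Fin n) F) :
    σ.permMatrix F * M = M.submatrix σ id :=
  PEquiv.toMatrix_toPEquiv_mul σ M

lemma mul_permMatrix (σ : Perm (Fin n)) (M : Matrix (Fin n) (Fin n) F) :
    M * σ.permMatrix F = M.submatrix id σ.symm :=
  PEquiv.mul_toMatrix_toPEquiv M σ

lemma permMatrix_mul_inv (σ : Perm (Fin n)) :
    σ.permMatrix F * (σ⁻¹).permMatrix F = 1 := by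
  rw [permMatrix_mul]
  ext i j
  simp [Matrix.submatrix_apply, Equiv.Perm.permMatrix, PEquiv.toMatrix,
    Equiv.toPEquiv_apply, Matrix.one_apply, Equiv.Perm.inv_def, eq_comm]

lemma inv_permMatrix_mul (σ : Perm (Fin n)) :
    (σ⁻¹).permMatrix F * σ.permMatrix F = 1 := by
  simpa using permMatrix_mul_inv (F := F) σ⁻¹

lemma isUnit_det_permMatrix (σ : Perm (Fin n)) : IsUnit (σ.permMatrix F).det :=
  isUnit_det_of_right_inverse (permMatrix_mul_inv σ)

-- Borel basics
lemma borel_one : (1 : Matrix (Fin n) (Fin n) F) ∈ borelSubgroup n F :=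
  ⟨Matrix.blockTriangular_one, by simp⟩

lemma borel_mul {a b : Matrix (Fin n) (Fin n) F} (ha : a ∈ borelSubgroup n F)
    (hb : b ∈ borelSubgroup n F) : a * b ∈ borelSubgroup n F :=
  ⟨ha.1.mul hb.1, by rw [Matrix.det_mul]; exact ha.2.mul hb.2⟩

lemma borel_isUnit {a : Matrix (Fin n) (Fin n) F} (ha : a ∈ borelSubgroup n F) :
    IsUnit a.det := ha.2

lemma borel_inv {a : Matrix (Fin n) (Fin n) F} (ha : a ∈ borelSubgroup n F) :
    a⁻¹ ∈ borelSubgroup n F := by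
  have := a.invertibleOfIsUnitDet ha.2
  exact ⟨Matrix.blockTriangular_inv_of_blockTriangular ha.1, a.isUnit_nonsing_inv_det ha.2⟩

lemma borel_mul_nonsing_inv {a : Matrix (Fin n) (Fin n) F} (ha : a ∈ borelSubgroup n F) :
    a * a⁻¹ = 1 := a.mul_nonsing_inv ha.2

lemma borel_nonsing_inv_mul {a : Matrix (Fin n) (Fin n) F} (ha : a ∈ borelSubgroup n F) :
    a⁻¹ * a = 1 := a.nonsing_inv_mul ha.2

/-- diagonal entries of a Borel element are nonzero -/
lemma borel_diag_ne_zero {a : Matrix (Fin n) (Fin n) F} (ha : a ∈ borelSubgroup n F) (i : Fin n) :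
    a i i ≠ 0 := by
  have hdet := Matrix.det_of_upperTriangular ha.1
  have : a.det ≠ 0 := ha.2.ne_zero
  rw [hdet] at this
  exact Finset.prod_ne_zero_iff.mp this i (Finset.mem_univ i)

lemma mem_borel_of (h1 : Matrix.BlockTriangular a id) (h2 : ∀ i, a i i ≠ 0) :
    a ∈ borelSubgroup n F := by
  refine ⟨h1, ?_⟩
  rw [isUnit_iff_ne_zero, Matrix.det_of_upperTriangular h1]
  exact Finset.prod_ne_zero_iff.mpr fun i _ => h2 i

variable {n : ℕ} {F : Type*} [Field F] [Fintype F]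

lemma perm_eq_one_of_le (π : Perm (Fin n)) (h : ∀ j, π j ≤ j) : π = 1 := by
  classical
  by_contra hne
  have hex : ∃ j, π j ≠ j := by
    by_contra h'; push_neg at h'; exact hne (Equiv.ext h')
  let s := Finset.univ.filter (fun j => π j ≠ j)
  have hs : s.Nonempty := ⟨hex.choose, by simp [s, hex.choose_spec]⟩
  set j := s.min' hs with hj
  have hjs : j ∈ s := s.min'_mem hs
  have hme : π j ≠ j := (Finset.mem_filter.mp hjs).2
  have hlt : π j < j := lt_of_le_of_ne (h j) hme
  have hfix : π (π j) = π j := by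
    by_contra hme2
    have : π j ∈ s := by simp [s, hme2]
    exact absurd (s.min'_le _ this) (not_le.mpr hlt)
  exact hme (π.injective hfix)
-- cell basics
lemma permMatrix_mem_bruhatCell_self (τ : Perm (Fin n)) :
    τ.permMatrix F ∈ bruhatCell n F τ :=
  ⟨1, borel_one, 1, borel_one, by simp⟩

lemma bruhatCell_subset_GL {τ : Perm (Fin n)} {M : Matrix (Fin n) (Fin n) F}
    (hM : M ∈ bruhatCell n F τ) : IsUnit M.det := by
  obtain ⟨b₁, hb₁, b₂, hb₂, rfl⟩ := hM
  rw [Matrix.det_mul, Matrix.det_mul]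
  exact (hb₁.2.mul (isUnit_det_permMatrix τ)).mul hb₂.2

lemma mul_mem_bruhatCell_left {τ : Perm (Fin n)} {b M : Matrix (Fin n) (Fin n) F}
    (hb : b ∈ borelSubgroup n F) (hM : M ∈ bruhatCell n F τ) :
    b * M ∈ bruhatCell n F τ := by
  obtain ⟨b₁, hb₁, b₂, hb₂, rfl⟩ := hM
  exact ⟨b * b₁, borel_mul hb hb₁, b₂, hb₂, by simp [Matrix.mul_assoc]⟩

lemma mul_mem_bruhatCell_right {τ : Perm (Fin n)} {b M : Matrix (Fin n) (Fin n) F}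
    (hb : b ∈ borelSubgroup n F) (hM : M ∈ bruhatCell n F τ) :
    M * b ∈ bruhatCell n F τ := by
  obtain ⟨b₁, hb₁, b₂, hb₂, rfl⟩ := hM
  exact ⟨b₁, hb₁, b₂ * b, borel_mul hb₂ hb, by simp [Matrix.mul_assoc]⟩

lemma mul_mem_bruhatCell_left_iff {τ : Perm (Fin n)} {b M : Matrix (Fin n) (Fin n) F}
    (hb : b ∈ borelSubgroup n F) :
    b * M ∈ bruhatCell n F τ ↔ M ∈ bruhatCell n F τ := by
  constructor
  · intro h
    have := mul_mem_bruhatCell_left (borel_inv hb) h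
    rwa [← Matrix.mul_assoc, borel_nonsing_inv_mul hb, Matrix.one_mul] at this
  · exact mul_mem_bruhatCell_left hb

lemma mul_mem_bruhatCell_right_iff {τ : Perm (Fin n)} {b M : Matrix (Fin n) (Fin n) F}
    (hb : b ∈ borelSubgroup n F) :
    M * b ∈ bruhatCell n F τ ↔ M ∈ bruhatCell n F τ := by
  constructor
  · intro h
    have := mul_mem_bruhatCell_right (borel_inv hb) h
    rwa [Matrix.mul_assoc, borel_mul_nonsing_inv hb, Matrix.mul_one] at this
  · exact mul_mem_bruhatCell_right hb

/-- Key disjointness: if `P_σ ∈ B τ B` then `σ = τ`. -/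
lemma eq_of_permMatrix_mem_bruhatCell {σ τ : Perm (Fin n)}
    (h : σ.permMatrix F ∈ bruhatCell n F τ) : σ = τ := by
  obtain ⟨b₁, hb₁, b₂, hb₂, heq⟩ := h
  have key : σ.permMatrix F * b₂⁻¹ = b₁ * τ.permMatrix F := by
    rw [heq, Matrix.mul_assoc, Matrix.mul_assoc, borel_mul_nonsing_inv hb₂, Matrix.mul_one]
  have hle : ∀ j, (σ * τ⁻¹) j ≤ j := by
    intro j
    by_contra hgt
    push_neg at hgt
    have h1 : (σ.permMatrix F * b₂⁻¹) (τ⁻¹ j) j = b₂⁻¹ (σ (τ⁻¹ j)) j := by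
      rw [permMatrix_mul]; rfl
    have h2 : (b₁ * τ.permMatrix F) (τ⁻¹ j) j = b₁ (τ⁻¹ j) (τ⁻¹ j) := by
      rw [mul_permMatrix]; rfl
    have hgt' : id j < id (σ (τ⁻¹ j)) := by simpa [Equiv.Perm.mul_apply] using hgt
    have h3 : b₂⁻¹ (σ (τ⁻¹ j)) j = 0 := (borel_inv hb₂).1 hgt'
    have h4 : b₁ (τ⁻¹ j) (τ⁻¹ j) ≠ 0 := borel_diag_ne_zero hb₁ _
    have h5 : b₁ (τ⁻¹ j) (τ⁻¹ j) = 0 := by rw [← h2, ← key, h1, h3]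
    exact h4 h5
  exact mul_inv_eq_one.mp (perm_eq_one_of_le _ hle)

-- transvections
lemma vecMulVec_col_row (w v : Fin n → F) :
    Matrix.vecMulVec w v = Matrix.replicateCol Unit w * Matrix.replicateRow Unit v := by
  ext i j; simp [Matrix.vecMulVec_apply, Matrix.mul_apply]

lemma transvection_det_one {T : Matrix (Fin n) (Fin n) F} (hT : T ∈ transvections n F) :
    T.det = 1 := by
  obtain ⟨a, v, ha, hv, hav, rfl⟩ := hT
  have hd : a ⬝ᵥ v = 0 := hav
  rw [vecMulVec_col_row, Matrix.det_one_add_replicateCol_mul_replicateRow, hd, add_zero]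

lemma transvection_isUnit_det {T : Matrix (Fin n) (Fin n) F} (hT : T ∈ transvections n F) :
    IsUnit T.det := by rw [transvection_det_one hT]; exact isUnit_one

lemma transvections_conj {g h T : Matrix (Fin n) (Fin n) F} (hgh : g * h = 1)
    (hT : T ∈ transvections n F) : h * T * g ∈ transvections n F := by
  have hhg : h * g = 1 := by rwa [mul_eq_one_comm] at hgh
  obtain ⟨a, v, ha, hv, hav, rfl⟩ := hT
  refine ⟨a ᵥ* g, h *ᵥ v, ?_, ?_, ?_, ?_⟩
  · intro h0
    apply ha
    have := congrArg (· ᵥ* h) h0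
    simpa [Matrix.vecMul_vecMul, hgh] using this
  · intro h0
    apply hv
    have := congrArg (g *ᵥ ·) h0
    simpa [Matrix.mulVec_mulVec, hgh] using this
  · have : (a ᵥ* g) ⬝ᵥ (h *ᵥ v) = a ⬝ᵥ v := by
      rw [← Matrix.dotProduct_mulVec, Matrix.mulVec_mulVec, hgh, Matrix.one_mulVec]
    simpa [dotProduct] using this.trans hav
  · have hc : h * Matrix.vecMulVec v a * g = Matrix.vecMulVec (h *ᵥ v) (a ᵥ* g) := by
      rw [vecMulVec_col_row, vecMulVec_col_row, Matrix.replicateCol_mulVec, Matrix.replicateRow_vecMul,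
        Matrix.mul_assoc, Matrix.mul_assoc, Matrix.mul_assoc]
    rw [Matrix.mul_add, Matrix.add_mul, Matrix.mul_one, hhg, hc]

lemma card_cell_const {σ τ : Perm (Fin n)} {M : Matrix (Fin n) (Fin n) F}
    (hM : M ∈ bruhatCell n F σ) :
    Nat.card {T | T ∈ transvections n F ∧ T * M ∈ bruhatCell n F τ}
      = Nat.card {T | T ∈ transvections n F ∧ T * σ.permMatrix F ∈ bruhatCell n F τ} := by
  obtain ⟨b₁, hb₁, b₂, hb₂, rfl⟩ := hM
  have h1 : b₁ * b₁⁻¹ = 1 := borel_mul_nonsing_inv hb₁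
  have h1' : b₁⁻¹ * b₁ = 1 := borel_nonsing_inv_mul hb₁
  apply Nat.card_congr
  refine ⟨fun T => ⟨b₁⁻¹ * T.1 * b₁, ?_, ?_⟩, fun S => ⟨b₁ * S.1 * b₁⁻¹, ?_, ?_⟩, ?_, ?_⟩
  · exact transvections_conj h1 T.2.1
  · have hT2 := T.2.2
    have : T.1 * (b₁ * Perm.permMatrix F σ * b₂) = ((T.1 * b₁) * Perm.permMatrix F σ) * b₂ := by
      simp [Matrix.mul_assoc]
    rw [this, mul_mem_bruhatCell_right_iff hb₂] at hT2
    have := mul_mem_bruhatCell_left (borel_inv hb₁) hT2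
    rwa [← Matrix.mul_assoc, ← Matrix.mul_assoc] at this
  · exact transvections_conj h1' S.2.1
  · have hS2 := S.2.2
    have h3 : b₁ * S.1 * b₁⁻¹ * (b₁ * Perm.permMatrix F σ * b₂)
        = (b₁ * (S.1 * Perm.permMatrix F σ)) * b₂ := by
      simp only [Matrix.mul_assoc]
      rw [Matrix.nonsing_inv_mul_cancel_left _ _ hb₁.2]
    rw [h3]
    exact mul_mem_bruhatCell_right hb₂ (mul_mem_bruhatCell_left hb₁ hS2)
  · intro T
    apply Subtype.ext
    show b₁ * (b₁⁻¹ * T.1 * b₁) * b₁⁻¹ = T.1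
    simp only [Matrix.mul_assoc]
    rw [Matrix.mul_nonsing_inv_cancel_left _ _ hb₁.2]
    simp only [← Matrix.mul_assoc]
    rw [Matrix.mul_nonsing_inv_cancel_right _ _ hb₁.2]
  · intro S
    apply Subtype.ext
    show b₁⁻¹ * (b₁ * S.1 * b₁⁻¹) * b₁ = S.1
    simp only [Matrix.mul_assoc]
    rw [Matrix.nonsing_inv_mul_cancel_left _ _ hb₁.2]
    simp only [← Matrix.mul_assoc]
    rw [Matrix.nonsing_inv_mul_cancel_right _ _ hb₁.2]

-- counting
open scoped Classical in
lemma card_support_finset (S : Finset (Fin n × Fin n)) (hS : ∀ p ∈ S, p.1 ≠ p.2) :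
    (univ.filter fun M : Matrix (Fin n) (Fin n) F =>
        (∀ i j, i ≠ j → (i, j) ∉ S → M i j = 0) ∧ ∀ i, M i i ≠ 0).card
      = (Fintype.card F - 1) ^ n * Fintype.card F ^ S.card := by
  rw [← Fintype.card_subtype]
  have e : {M : Matrix (Fin n) (Fin n) F //
      (∀ i j, i ≠ j → (i, j) ∉ S → M i j = 0) ∧ ∀ i, M i i ≠ 0}
      ≃ (Fin n → {x : F // x ≠ 0}) × (S → F) := by
    refine ⟨fun M => ⟨fun i => ⟨M.1 i i, M.2.2 i⟩, fun p => M.1 p.1.1 p.1.2⟩,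
      fun du => ⟨Matrix.of fun i j =>
        if h : i = j then (du.1 i).1 else if hp : (i, j) ∈ S then du.2 ⟨(i, j), hp⟩ else 0,
        ?_, ?_⟩, ?_, ?_⟩
    · intro i j hij hmem
      simp only [Matrix.of_apply, dif_neg hij]
      rw [dif_neg hmem]
    · intro i
      simpa only [Matrix.of_apply, dif_pos rfl, dite_true] using (du.1 i).2
    · intro M
      apply Subtype.ext
      ext i j
      by_cases h : i = j
      · subst h; simp
      · simp only [Matrix.of_apply, dif_neg h]
        by_cases hp : (i, j) ∈ S
        · rw [dif_pos hp]
        · rw [dif_neg hp, M.2.1 i j h hp]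
    · intro du
      refine Prod.ext (funext fun i => Subtype.ext ?_) (funext fun p => ?_)
      · simp
      · have hne : p.1.1 ≠ p.1.2 := hS p.1 p.2
        have hmem : (p.1.1, p.1.2) ∈ S := by rw [Prod.mk.eta]; exact p.2
        simp only [Matrix.of_apply, dif_neg hne, dif_pos hmem]
  rw [Fintype.card_congr e, Fintype.card_prod, Fintype.card_fun, Fintype.card_fun]
  congr 2
  · rw [Fintype.card_subtype_compl, Fintype.card_subtype_eq]
  · exact Fintype.card_fin n
  · exact Fintype.card_coe S

def upperPairs (n : ℕ) : Finset (Fin n × Fin n) := univ.filter fun p => p.1 < p.2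

def stabPairs (n : ℕ) (σ : Perm (Fin n)) : Finset (Fin n × Fin n) :=
  univ.filter fun p => p.1 < p.2 ∧ σ p.1 < σ p.2

lemma mem_borel_iff {M : Matrix (Fin n) (Fin n) F} :
    M ∈ borelSubgroup n F
      ↔ ((∀ i j, i ≠ j → (i, j) ∉ upperPairs n → M i j = 0) ∧ ∀ i, M i i ≠ 0) := by
  constructor
  · intro h
    refine ⟨fun i j hij hmem => ?_, borel_diag_ne_zero h⟩
    have : ¬ i < j := by simpa [upperPairs] using hmem
    exact h.1 (show id j < id i from hij.lt_or_gt.resolve_left this)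
  · intro h
    refine mem_borel_of (fun i j hji => ?_) h.2
    exact h.1 i j (ne_of_gt hji) (by simp [upperPairs]; exact le_of_lt hji)

lemma conj_apply (σ : Perm (Fin n)) (g : Matrix (Fin n) (Fin n) F) (i j : Fin n) :
    ((σ⁻¹.permMatrix F) * g * σ.permMatrix F) i j = g (σ⁻¹ i) (σ⁻¹ j) := by
  rw [permMatrix_mul, mul_permMatrix]
  rfl

lemma mem_stab_iff {σ : Perm (Fin n)} {g : Matrix (Fin n) (Fin n) F} :
    (g ∈ borelSubgroup n F ∧ (σ⁻¹.permMatrix F) * g * σ.permMatrix F ∈ borelSubgroup n F)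
      ↔ ((∀ i j, i ≠ j → (i, j) ∉ stabPairs n σ → g i j = 0) ∧ ∀ i, g i i ≠ 0) := by
  constructor
  · rintro ⟨hb, hc⟩
    refine ⟨fun i j hij hmem => ?_, borel_diag_ne_zero hb⟩
    by_cases hji : j < i
    · exact hb.1 hji
    · have hij' : i < j := hij.lt_or_gt.resolve_right hji
      have hss : ¬ σ i < σ j := by
        intro hss
        exact hmem (by simp [stabPairs]; exact ⟨hij', hss⟩)
      have hne : σ j ≠ σ i := fun h => σ.injective.ne hij h.symm
      have hss' : σ j < σ i := hne.lt_or_gt.resolve_right hss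
      have := hc.1 (show id (σ j) < id (σ i) from hss')
      rwa [conj_apply, Equiv.Perm.inv_def, Equiv.symm_apply_apply, Equiv.symm_apply_apply] at this
  · rintro ⟨hz, hd⟩
    constructor
    · refine mem_borel_of (fun i j hji => ?_) hd
      refine hz i j (ne_of_gt hji) ?_
      simp only [stabPairs, Finset.mem_filter, Finset.mem_univ, true_and, not_and]
      intro h; exact absurd h (asymm hji)
    · refine mem_borel_of (fun i j hji => ?_) ?_
      · rw [conj_apply]
        refine hz _ _ (fun h => (ne_of_gt hji) (by rw [← (show σ (σ⁻¹ i) = i from σ.apply_symm_apply i), h, (show σ (σ⁻¹ j) = j from σ.apply_symm_apply j)])) ?_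
        simp only [stabPairs, Finset.mem_filter, Finset.mem_univ, true_and, not_and]
        intro h hs
        rw [Equiv.Perm.inv_def, Equiv.apply_symm_apply, Equiv.apply_symm_apply] at hs
        exact absurd hs (asymm hji)
      · intro i; rw [conj_apply]; exact hd _

open scoped Classical in
lemma card_borelF :
    (univ.filter (· ∈ borelSubgroup n F)).card
      = (Fintype.card F - 1) ^ n * Fintype.card F ^ (upperPairs n).card := by
  rw [← card_support_finset (upperPairs n)
    (fun p hp => by simp only [upperPairs, Finset.mem_filter] at hp; exact ne_of_lt hp.2)]
  congr 1
  ext M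
  simp only [Finset.mem_filter, Finset.mem_univ, true_and]
  exact mem_borel_iff

open scoped Classical in
lemma card_stabF (σ : Perm (Fin n)) :
    (univ.filter fun g : Matrix (Fin n) (Fin n) F =>
        g ∈ borelSubgroup n F ∧ (σ⁻¹.permMatrix F) * g * σ.permMatrix F ∈ borelSubgroup n F).card
      = (Fintype.card F - 1) ^ n * Fintype.card F ^ (stabPairs n σ).card := by
  rw [← card_support_finset (stabPairs n σ)
    (fun p hp => by simp only [stabPairs, Finset.mem_filter] at hp; exact ne_of_lt hp.2.1)]
  congr 1
  ext M
  simp only [Finset.mem_filter, Finset.mem_univ, true_and]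
  exact mem_stab_iff

lemma card_stabPairs_add_inversions (σ : Perm (Fin n)) :
    (stabPairs n σ).card + inversions n σ = (upperPairs n).card := by
  classical
  have h := Finset.card_filter_add_card_filter_not
    (s := upperPairs n) (p := fun p : Fin n × Fin n => σ p.1 < σ p.2)
  rw [← h]
  congr 1
  · rw [stabPairs, upperPairs, Finset.filter_filter]
  · rw [inversions, upperPairs, Finset.filter_filter]
    congr 1
    ext p
    simp only [Finset.mem_filter, Finset.mem_univ, true_and, not_lt]
    constructor
    · rintro ⟨h1, h2⟩
      exact ⟨h1, le_of_lt h2⟩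
    · rintro ⟨h1, h2⟩
      refine ⟨h1, lt_of_le_of_ne h2 fun h => σ.injective.ne (ne_of_lt h1) h.symm⟩

lemma card_upperPairs : (upperPairs n).card = ∑ i ∈ Finset.range n, i := by
  classical
  rw [upperPairs, Finset.card_filter]
  rw [Fintype.sum_prod_type]
  have : ∀ a : Fin n, (∑ b : Fin n, if a < b then 1 else 0) = n - 1 - (a : ℕ) := by
    intro a
    rw [← Finset.card_filter, show (univ.filter fun b => a < b) = Finset.Ioi a by ext; simp,
      Fin.card_Ioi]
  rw [Finset.sum_congr rfl fun a _ => this a, Fin.sum_univ_eq_sum_range]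
  exact Finset.sum_range_reflect (fun i => i) n

lemma permMatrix_cancel_left (σ : Perm (Fin n)) (X : Matrix (Fin n) (Fin n) F) :
    σ.permMatrix F * ((σ⁻¹).permMatrix F * X) = X := by
  rw [← Matrix.mul_assoc, permMatrix_mul_inv, Matrix.one_mul]

lemma permMatrix_cancel_left' (σ : Perm (Fin n)) (X : Matrix (Fin n) (Fin n) F) :
    (σ⁻¹).permMatrix F * (σ.permMatrix F * X) = X := by
  rw [← Matrix.mul_assoc, inv_permMatrix_mul, Matrix.one_mul]

open scoped Classical in
lemma orbit_stab (σ : Perm (Fin n)) :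
    (univ.filter (· ∈ bruhatCell n F σ)).card *
      (univ.filter fun g : Matrix (Fin n) (Fin n) F =>
        g ∈ borelSubgroup n F ∧
          (σ⁻¹).permMatrix F * g * σ.permMatrix F ∈ borelSubgroup n F).card
      = (univ.filter (· ∈ borelSubgroup n F)).card ^ 2 := by
  set P := σ.permMatrix F with hP
  set Q := (σ⁻¹).permMatrix F with hQ
  set BF : Finset (Matrix (Fin n) (Fin n) F) := univ.filter (· ∈ borelSubgroup n F) with hBF
  set s : Finset (Matrix (Fin n) (Fin n) F × Matrix (Fin n) (Fin n) F) := BF ×ˢ BF with hs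
  set t : Finset (Matrix (Fin n) (Fin n) F) := univ.filter (· ∈ bruhatCell n F σ) with ht
  have hmem_BF : ∀ {x : Matrix (Fin n) (Fin n) F}, x ∈ BF ↔ x ∈ borelSubgroup n F := by
    intro x; simp [hBF]
  have hmap : ∀ x ∈ s, x.1 * P * x.2 ∈ t := by
    rintro ⟨b₁, b₂⟩ hx
    rw [hs, Finset.mem_product] at hx
    simp only [ht, Finset.mem_filter, Finset.mem_univ, true_and]
    exact ⟨b₁, hmem_BF.mp hx.1, b₂, hmem_BF.mp hx.2, rfl⟩
  have hsum := Finset.card_eq_sum_card_fiberwise hmap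
  have hfiber : ∀ M ∈ t, (s.filter fun x => x.1 * P * x.2 = M).card
      = (univ.filter fun g : Matrix (Fin n) (Fin n) F =>
          g ∈ borelSubgroup n F ∧ Q * g * P ∈ borelSubgroup n F).card := by
    intro M hM
    rw [ht, Finset.mem_filter] at hM
    obtain ⟨c₁, hc₁, c₂, hc₂, heq⟩ := hM.2
    have hc₁d := hc₁.2
    have hc₂d := hc₂.2
    refine Finset.card_bij' (fun x _ => c₁⁻¹ * x.1)
      (fun g _ => (c₁ * g, Q * g⁻¹ * P * c₂)) ?_ ?_ ?_ ?_
    · -- forward mem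
      rintro ⟨b₁, b₂⟩ hx
      rw [Finset.mem_filter] at hx
      obtain ⟨hxs, hfib⟩ := hx
      rw [hs, Finset.mem_product] at hxs
      have hb₁ := hmem_BF.mp hxs.1
      have hb₂ := hmem_BF.mp hxs.2
      simp only [Finset.mem_filter, Finset.mem_univ, true_and]
      refine ⟨borel_mul (borel_inv hc₁) hb₁, ?_⟩
      have key : c₁⁻¹ * b₁ * P = P * (c₂ * b₂⁻¹) := by
        have h1 : b₁ * P = c₁ * P * c₂ * b₂⁻¹ := by
          rw [heq] at hfib
          have := congrArg (· * b₂⁻¹) hfib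
          simpa [Matrix.mul_nonsing_inv_cancel_right _ _ hb₂.2] using this
        calc c₁⁻¹ * b₁ * P = c₁⁻¹ * (b₁ * P) := by rw [Matrix.mul_assoc]
          _ = c₁⁻¹ * (c₁ * (P * c₂ * b₂⁻¹)) := by rw [h1]; simp only [Matrix.mul_assoc]
          _ = P * c₂ * b₂⁻¹ := by rw [Matrix.nonsing_inv_mul_cancel_left _ _ hc₁d]
          _ = P * (c₂ * b₂⁻¹) := by rw [Matrix.mul_assoc]
      have hkey2 : Q * (c₁⁻¹ * b₁) * P = c₂ * b₂⁻¹ := by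
        rw [Matrix.mul_assoc Q, key, hP, hQ, permMatrix_cancel_left']
      show Q * (c₁⁻¹ * b₁) * P ∈ borelSubgroup n F
      rw [hkey2]
      exact borel_mul hc₂ (borel_inv hb₂)
    · -- backward mem
      intro g hg
      simp only [Finset.mem_filter, Finset.mem_univ, true_and] at hg
      obtain ⟨hgb, hgc⟩ := hg
      have hgd := hgb.2
      have hconj_inv : Q * g⁻¹ * P = (Q * g * P)⁻¹ := by
        symm
        apply Matrix.inv_eq_right_inv
        calc Q * g * P * (Q * g⁻¹ * P)
            = Q * g * (P * Q) * g⁻¹ * P := by simp only [Matrix.mul_assoc]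
          _ = Q * (g * g⁻¹) * P := by rw [hP, hQ, permMatrix_mul_inv]; simp only [Matrix.mul_one, Matrix.mul_assoc]
          _ = Q * P := by rw [Matrix.mul_nonsing_inv _ hgd, Matrix.mul_one]
          _ = 1 := by rw [hP, hQ, inv_permMatrix_mul]
      rw [Finset.mem_filter]
      constructor
      · rw [hs, Finset.mem_product]
        constructor
        · exact hmem_BF.mpr (borel_mul hc₁ hgb)
        · refine hmem_BF.mpr ?_
          show Q * g⁻¹ * P * c₂ ∈ borelSubgroup n F
          rw [hconj_inv]
          exact borel_mul (borel_inv hgc) hc₂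
      · show c₁ * g * P * (Q * g⁻¹ * P * c₂) = M
        calc c₁ * g * P * (Q * g⁻¹ * P * c₂)
            = c₁ * (g * ((P * Q) * (g⁻¹ * (P * c₂)))) := by simp only [Matrix.mul_assoc]
          _ = c₁ * (g * (g⁻¹ * (P * c₂))) := by rw [hP, hQ, permMatrix_mul_inv, Matrix.one_mul]
          _ = c₁ * (P * c₂) := by rw [Matrix.mul_nonsing_inv_cancel_left _ _ hgd]
          _ = M := by rw [heq, Matrix.mul_assoc]
    · -- left inverse
      rintro ⟨b₁, b₂⟩ hx
      rw [Finset.mem_filter] at hx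
      obtain ⟨hxs, hfib⟩ := hx
      rw [hs, Finset.mem_product] at hxs
      have hb₁ := hmem_BF.mp hxs.1
      have hb₂ := hmem_BF.mp hxs.2
      have h1 : c₁ * (c₁⁻¹ * b₁) = b₁ := Matrix.mul_nonsing_inv_cancel_left _ _ hc₁d
      refine Prod.ext h1 ?_
      show Q * (c₁⁻¹ * b₁)⁻¹ * P * c₂ = b₂
      rw [Matrix.mul_inv_rev, Matrix.nonsing_inv_nonsing_inv _ hc₁d]
      calc Q * (b₁⁻¹ * c₁) * P * c₂
          = Q * (b₁⁻¹ * (c₁ * P * c₂)) := by simp only [Matrix.mul_assoc]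
        _ = Q * (b₁⁻¹ * (b₁ * P * b₂)) := by rw [← heq, hfib]
        _ = Q * (P * b₂) := by rw [Matrix.mul_assoc b₁, Matrix.nonsing_inv_mul_cancel_left _ _ hb₁.2]
        _ = b₂ := by rw [hP, hQ, permMatrix_cancel_left']
    · -- right inverse
      intro g hg
      show c₁⁻¹ * (c₁ * g) = g
      exact Matrix.nonsing_inv_mul_cancel_left _ _ hc₁d
  calc t.card * (univ.filter fun g : Matrix (Fin n) (Fin n) F =>
        g ∈ borelSubgroup n F ∧ Q * g * P ∈ borelSubgroup n F).card
      = ∑ _M ∈ t, (univ.filter fun g : Matrix (Fin n) (Fin n) F =>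
          g ∈ borelSubgroup n F ∧ Q * g * P ∈ borelSubgroup n F).card := by
        rw [Finset.sum_const, smul_eq_mul]
    _ = ∑ M ∈ t, (s.filter fun x => x.1 * P * x.2 = M).card := by
        exact Finset.sum_congr rfl fun M hM => (hfiber M hM).symm
    _ = s.card := hsum.symm
    _ = BF.card ^ 2 := by rw [hs, Finset.card_product, sq]

-- Mahonian
noncomputable def insertPerm {m : ℕ} (p : Fin (m + 1)) (σ : Perm (Fin m)) : Perm (Fin (m + 1)) :=
  Equiv.ofBijective (Fin.cons p (fun i => p.succAbove (σ i)))
    (by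
      rw [Fintype.bijective_iff_injective_and_card]
      refine ⟨fun x y h => ?_, rfl⟩
      induction x using Fin.cases <;> induction y using Fin.cases <;>
        simp only [Fin.cons_zero, Fin.cons_succ] at h
      · rfl
      · exact absurd h.symm (Fin.succAbove_ne p _)
      · exact absurd h (Fin.succAbove_ne p _)
      · rw [Fin.succAbove_right_injective.eq_iff] at h
        rw [σ.injective h])

lemma insertPerm_zero {m : ℕ} (p : Fin (m + 1)) (σ : Perm (Fin m)) :
    insertPerm p σ 0 = p := by
  simp [insertPerm]

lemma insertPerm_succ {m : ℕ} (p : Fin (m + 1)) (σ : Perm (Fin m)) (i : Fin m) :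
    insertPerm p σ i.succ = p.succAbove (σ i) := by
  simp [insertPerm]

lemma insertPerm_bijective (m : ℕ) :
    Function.Bijective (fun x : Fin (m + 1) × Perm (Fin m) => insertPerm x.1 x.2) := by
  rw [Fintype.bijective_iff_injective_and_card]
  constructor
  · rintro ⟨p, σ⟩ ⟨p', σ'⟩ h
    simp only at h
    have hp : p = p' := by
      rw [← insertPerm_zero p σ, ← insertPerm_zero p' σ', h]
    subst hp
    have hσ : σ = σ' := by
      ext i
      have := congrArg (fun e : Perm (Fin (m + 1)) => e i.succ) h
      simp only [insertPerm_succ] at this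
      exact congrArg Fin.val (Fin.succAbove_right_injective this)
    rw [hσ]
  · rw [Fintype.card_prod, Fintype.card_perm, Fintype.card_perm, Fintype.card_fin,
      Fintype.card_fin, Nat.factorial_succ]

lemma card_filter_val_lt {m : ℕ} (k : ℕ) (hk : k ≤ m) :
    (univ.filter fun v : Fin m => (v : ℕ) < k).card = k := by
  rw [show (univ.filter fun v : Fin m => (v : ℕ) < k).card = (Finset.range k).card from ?_,
    Finset.card_range]
  refine Finset.card_bij' (fun v _ => (v : ℕ))
    (fun a ha => ⟨a, lt_of_lt_of_le (Finset.mem_range.mp ha) hk⟩) ?_ ?_ ?_ ?_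
  · intro v hv; simpa using (Finset.mem_filter.mp hv).2
  · intro a ha; simp [Finset.mem_range.mp ha]
  · intro v hv; simp
  · intro a ha; simp

lemma inversions_insertPerm {m : ℕ} (p : Fin (m + 1)) (σ : Perm (Fin m)) :
    inversions (m + 1) (insertPerm p σ) = p + inversions m σ := by
  rw [inversions, Finset.card_filter, Fintype.sum_prod_type, Fin.sum_univ_succ]
  have h1 : (∑ b : Fin (m + 1),
      if (0 : Fin (m + 1)) < b ∧ insertPerm p σ b < insertPerm p σ 0 then 1 else 0) = (p : ℕ) := by
    rw [Fin.sum_univ_succ, if_neg (by simp)]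
    have heq : ∀ j : Fin m,
        (((0 : Fin (m + 1)) < j.succ ∧ insertPerm p σ j.succ < insertPerm p σ 0)
          ↔ ((σ j : ℕ) < (p : ℕ))) := by
      intro j
      rw [insertPerm_succ, insertPerm_zero]
      simp only [Fin.succ_pos, true_and]
      rw [Fin.succAbove_lt_iff_castSucc_lt, Fin.lt_def, Fin.coe_castSucc]
    rw [Finset.sum_congr rfl fun j _ => if_congr (heq j) rfl rfl, zero_add]
    rw [Equiv.sum_comp σ (fun v : Fin m => if (v : ℕ) < (p : ℕ) then 1 else 0),
      ← Finset.card_filter]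
    exact card_filter_val_lt _ p.is_le
  have h2 : (∑ i : Fin m, ∑ b : Fin (m + 1),
      if i.succ < b ∧ insertPerm p σ b < insertPerm p σ i.succ then 1 else 0)
      = inversions m σ := by
    have heach : ∀ i : Fin m, (∑ b : Fin (m + 1),
        if i.succ < b ∧ insertPerm p σ b < insertPerm p σ i.succ then 1 else 0)
        = ∑ j : Fin m, if i < j ∧ σ j < σ i then 1 else 0 := by
      intro i
      rw [Fin.sum_univ_succ, if_neg (by simp [Fin.not_lt_zero]), zero_add]
      refine Finset.sum_congr rfl fun j _ => if_congr ?_ rfl rfl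
      rw [insertPerm_succ, insertPerm_succ, Fin.succ_lt_succ_iff,
        Fin.succAbove_lt_succAbove_iff]
    rw [Finset.sum_congr rfl fun i _ => heach i, inversions, Finset.card_filter,
      Fintype.sum_prod_type]
  rw [h1, h2]

lemma mahonian (q : ℕ) (m : ℕ) :
    (∑ σ : Perm (Fin m), q ^ inversions m σ)
      = ∏ k ∈ Finset.range m, ∑ i ∈ Finset.range (k + 1), q ^ i := by
  induction m with
  | zero =>
    rw [Finset.prod_range_zero]
    rw [show (univ : Finset (Perm (Fin 0))) = {1} from by
      apply Finset.eq_singleton_iff_unique_mem.mpr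
      exact ⟨Finset.mem_univ _, fun σ _ => Equiv.ext fun x => absurd x.2 (by omega)⟩]
    simp [inversions]
  | succ m ih =>
    rw [← Fintype.sum_bijective _ (insertPerm_bijective m) _
      (fun ω => q ^ inversions (m + 1) ω) (fun x => rfl)]
    rw [Fintype.sum_prod_type]
    simp only [inversions_insertPerm, pow_add]
    rw [← Finset.sum_mul_sum]
    rw [ih, Finset.prod_range_succ]
    rw [Fin.sum_univ_eq_sum_range (fun i => q ^ i) (m + 1)]
    ring

-- geometric series in ℕ
lemma geom_succ (q k : ℕ) (hq : 1 ≤ q) :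
    (q - 1) * (∑ t ∈ Finset.range k, q ^ t) + 1 = q ^ k := by
  induction k with
  | zero => simp
  | succ k ih =>
    rw [Finset.sum_range_succ, Nat.mul_add]
    have : (q - 1) * q ^ k + q ^ k = q * q ^ k := by
      have : q - 1 + 1 = q := Nat.succ_pred_eq_of_pos hq
      calc (q - 1) * q ^ k + q ^ k = ((q - 1) + 1) * q ^ k := by ring
        _ = q * q ^ k := by rw [this]
    calc (q - 1) * ∑ t ∈ Finset.range k, q ^ t + (q - 1) * q ^ k + 1
        = ((q - 1) * ∑ t ∈ Finset.range k, q ^ t + 1) + (q - 1) * q ^ k := by ring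
      _ = q ^ k + (q - 1) * q ^ k := by rw [ih]
      _ = q * q ^ k := by rw [add_comm, this]
      _ = q ^ (k + 1) := by rw [pow_succ, mul_comm]

lemma pow_sub_pow_eq (q n i : ℕ) (hq : 1 ≤ q) (hi : i ≤ n) :
    q ^ n - q ^ i = q ^ i * ((q - 1) * ∑ t ∈ Finset.range (n - i), q ^ t) := by
  apply Nat.sub_eq_of_eq_add
  calc q ^ n = q ^ i * q ^ (n - i) := by rw [← pow_add, Nat.add_sub_cancel' hi]
    _ = q ^ i * ((q - 1) * (∑ t ∈ Finset.range (n - i), q ^ t) + 1) := by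
        rw [geom_succ _ _ hq]
    _ = q ^ i * ((q - 1) * ∑ t ∈ Finset.range (n - i), q ^ t) + q ^ i := by ring

open scoped Classical in
lemma card_GLF :
    (univ.filter fun M : Matrix (Fin n) (Fin n) F => IsUnit M.det).card
      = Nat.card (GL (Fin n) F) := by
  rw [Nat.card_eq_fintype_card, ← Fintype.card_coe]
  apply Fintype.card_congr
  refine ⟨fun M => Matrix.nonsingInvUnit M.1 (by
      have := M.2; simp only [Finset.mem_filter] at this; exact this.2),
    fun u => ⟨u.1, by
      simp only [Finset.mem_filter, Finset.mem_univ, true_and]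
      exact Matrix.isUnit_iff_isUnit_det _ |>.mp ⟨u, rfl⟩⟩, ?_, ?_⟩
  · intro M; apply Subtype.ext; rfl
  · intro u; apply Units.ext; rfl

open scoped Classical in
lemma card_GLF_eq :
    (univ.filter fun M : Matrix (Fin n) (Fin n) F => IsUnit M.det).card
      = (∑ σ : Perm (Fin n), Fintype.card F ^ inversions n σ)
        * ((Fintype.card F - 1) ^ n * Fintype.card F ^ (upperPairs n).card) := by
  have hq : 1 ≤ Fintype.card F := Fintype.card_pos
  rw [card_GLF, Matrix.card_GL_field,
    show (∏ i : Fin n, (Fintype.card F ^ n - Fintype.card F ^ (i : ℕ)))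
      = ∏ i ∈ Finset.range n, (Fintype.card F ^ n - Fintype.card F ^ i) from
      Fin.prod_univ_eq_prod_range (fun j => Fintype.card F ^ n - Fintype.card F ^ j) n]
  set q := Fintype.card F with hqdef
  have step1 : ∀ i ∈ Finset.range n,
      q ^ n - q ^ i = q ^ i * (q - 1) * (∑ t ∈ Finset.range (n - i), q ^ t) := by
    intro i hi
    rw [pow_sub_pow_eq q n i hq (le_of_lt (Finset.mem_range.mp hi))]
    ring
  rw [Finset.prod_congr rfl step1]
  rw [Finset.prod_mul_distrib, Finset.prod_mul_distrib, Finset.prod_const,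
    Finset.card_range, Finset.prod_pow_eq_pow_sum]
  have step2 : (∏ i ∈ Finset.range n, ∑ t ∈ Finset.range (n - i), q ^ t)
      = ∏ k ∈ Finset.range n, ∑ t ∈ Finset.range (k + 1), q ^ t := by
    rw [← Finset.prod_range_reflect (fun k => ∑ t ∈ Finset.range (k + 1), q ^ t) n]
    apply Finset.prod_congr rfl
    intro i hi
    have : n - 1 - i + 1 = n - i := by
      have := Finset.mem_range.mp hi; omega
    rw [this]
  rw [step2, ← mahonian q n, card_upperPairs]
  ring

open scoped Classical in
lemma card_cellF (σ : Perm (Fin n)) :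
    (univ.filter (· ∈ bruhatCell n F σ)).card
      = Fintype.card F ^ inversions n σ * (univ.filter (· ∈ borelSubgroup n F)).card := by
  have hq : 1 ≤ Fintype.card F := Fintype.card_pos
  have hq2 : 2 ≤ Fintype.card F := Fintype.one_lt_card
  have h1 := orbit_stab (F := F) σ
  have h2 := card_stabF (F := F) σ
  have h3 := card_stabPairs_add_inversions σ
  have h4 := card_borelF (n := n) (F := F)
  have hstabpos : 0 < (univ.filter fun g : Matrix (Fin n) (Fin n) F =>
      g ∈ borelSubgroup n F ∧
        (σ⁻¹).permMatrix F * g * σ.permMatrix F ∈ borelSubgroup n F).card := by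
    rw [h2]
    exact Nat.mul_pos (pow_pos (by omega) n) (pow_pos (by omega) _)
  apply Nat.eq_of_mul_eq_mul_right hstabpos
  rw [h1, sq, h4, h2, ← h3]
  rw [pow_add]
  ring

open scoped Classical in
lemma cells_disjoint {σ τ : Perm (Fin n)} (hst : σ ≠ τ) :
    Disjoint (univ.filter (· ∈ bruhatCell n F σ))
      (univ.filter (· ∈ bruhatCell n F τ)) := by
  rw [Finset.disjoint_left]
  intro M hMσ hMτ
  simp only [Finset.mem_filter, Finset.mem_univ, true_and] at hMσ hMτ
  apply hst
  obtain ⟨b₁, hb₁, b₂, hb₂, rfl⟩ := hMσ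
  apply eq_of_permMatrix_mem_bruhatCell (F := F)
  rw [Matrix.mul_assoc] at hMτ
  rw [mul_mem_bruhatCell_left_iff hb₁] at hMτ
  have : σ.permMatrix F * b₂ ∈ bruhatCell n F τ := hMτ
  rwa [mul_mem_bruhatCell_right_iff hb₂] at this

open scoped Classical in
lemma biUnion_cells :
    (Finset.univ : Finset (Perm (Fin n))).biUnion
        (fun σ => univ.filter (· ∈ bruhatCell n F σ))
      = (univ.filter fun M : Matrix (Fin n) (Fin n) F => IsUnit M.det) := by
  apply Finset.eq_of_subset_of_card_le
  · intro M hM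
    rw [Finset.mem_biUnion] at hM
    obtain ⟨σ, _, hMσ⟩ := hM
    simp only [Finset.mem_filter, Finset.mem_univ, true_and] at hMσ ⊢
    exact bruhatCell_subset_GL hMσ
  · rw [Finset.card_biUnion (fun σ _ τ _ hst => cells_disjoint hst)]
    rw [card_GLF_eq]
    rw [Finset.sum_congr rfl fun σ (_ : σ ∈ univ) => card_cellF (F := F) σ, ← Finset.sum_mul,
      card_borelF]

open scoped Classical in
lemma card_GL_filter_mul {T : Matrix (Fin n) (Fin n) F} (hT : T ∈ transvections n F)
    (τ : Perm (Fin n)) :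
    ((univ.filter fun M : Matrix (Fin n) (Fin n) F => IsUnit M.det).filter
        fun M => T * M ∈ bruhatCell n F τ).card
      = (univ.filter (· ∈ bruhatCell n F τ)).card := by
  have hTd : IsUnit T.det := transvection_isUnit_det hT
  refine Finset.card_bij' (fun M _ => T * M) (fun X _ => T⁻¹ * X) ?_ ?_ ?_ ?_
  · intro M hM
    simp only [Finset.mem_filter, Finset.mem_univ, true_and] at hM ⊢
    exact hM.2
  · intro X hX
    simp only [Finset.mem_filter, Finset.mem_univ, true_and] at hX ⊢
    have hXd : IsUnit X.det := bruhatCell_subset_GL hX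
    refine ⟨?_, ?_⟩
    · rw [Matrix.det_mul]
      exact (T.isUnit_nonsing_inv_det hTd).mul hXd
    · rw [Matrix.mul_nonsing_inv_cancel_left _ _ hTd]
      exact hX
  · intro M hM
    exact Matrix.nonsing_inv_mul_cancel_left _ _ hTd
  · intro X hX
    exact Matrix.mul_nonsing_inv_cancel_left _ _ hTd

end Mallows

open Mallows in
/-- For every `τ ∈ S_n`,
`∑_{σ ∈ S_n} q^{I(σ)} · |{T ∈ 𝒯 : Tσ ∈ BτB}| = q^{I(τ)} · |𝒯|`; i.e. the Mallows
distribution `π_q(σ) = q^{I(σ)}/[n]_q!` is stationary for the lumped transvection chain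
`P(σ, τ) = |{T ∈ 𝒯 : Tσ ∈ BτB}|/|𝒯|` on `S_n`. -/
theorem mallows_stationary
    (F : Type*) [Field F] [Fintype F] (n : ℕ) (hn : 2 ≤ n) (τ : Equiv.Perm (Fin n)) :
    ∑ σ : Equiv.Perm (Fin n),
        Fintype.card F ^ inversions n σ *
          Nat.card {T | T ∈ transvections n F ∧
            T * σ.permMatrix F ∈ bruhatCell n F τ}
      = Fintype.card F ^ inversions n τ * Nat.card (transvections n F) := by
  classical
  have hbridge : ∀ (p q : Matrix (Fin n) (Fin n) F → Prop),
      Nat.card {M | p M ∧ q M} = (univ.filter fun M => p M ∧ q M).card := fun p q => by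
    rw [Nat.card_eq_fintype_card]
    exact Fintype.card_of_subtype _ (fun x => by simp)
  have hT0 : Nat.card (transvections n F) = (univ.filter (· ∈ transvections n F)).card := by
    rw [Nat.card_eq_fintype_card]
    exact Fintype.card_of_subtype _ (fun x => by simp)
  rw [hT0]
  rw [show (∑ σ : Equiv.Perm (Fin n),
        Fintype.card F ^ inversions n σ *
          Nat.card {T | T ∈ transvections n F ∧ T * σ.permMatrix F ∈ bruhatCell n F τ})
      = ∑ σ : Equiv.Perm (Fin n),
        Fintype.card F ^ inversions n σ *
          (univ.filter fun T => T ∈ transvections n F ∧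
            T * σ.permMatrix F ∈ bruhatCell n F τ).card from
    Finset.sum_congr rfl fun σ _ => by
      rw [hbridge (fun T => T ∈ transvections n F)
        (fun T => T * σ.permMatrix F ∈ bruhatCell n F τ)]]
  have hq2 : 2 ≤ Fintype.card F := Fintype.one_lt_card
  have hBpos : 0 < (univ.filter (· ∈ borelSubgroup n F)).card := by
    rw [card_borelF]
    exact Nat.mul_pos (pow_pos (by omega) n) (pow_pos (by omega) _)
  apply Nat.eq_of_mul_eq_mul_right hBpos
  have hconst : ∀ σ : Equiv.Perm (Fin n),
      ∀ M ∈ univ.filter (· ∈ bruhatCell n F σ),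
      (univ.filter fun T => T ∈ transvections n F ∧ T * M ∈ bruhatCell n F τ).card
        = (univ.filter fun T => T ∈ transvections n F ∧
            T * σ.permMatrix F ∈ bruhatCell n F τ).card := by
    intro σ M hM
    rw [Finset.mem_filter] at hM
    have h := card_cell_const (τ := τ) hM.2
    rw [hbridge (fun T => T ∈ transvections n F) (fun T => T * M ∈ bruhatCell n F τ),
      hbridge (fun T => T ∈ transvections n F)
        (fun T => T * σ.permMatrix F ∈ bruhatCell n F τ)] at h
    exact h
  calc (∑ σ : Equiv.Perm (Fin n), Fintype.card F ^ inversions n σ *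
          (univ.filter fun T => T ∈ transvections n F ∧
            T * σ.permMatrix F ∈ bruhatCell n F τ).card)
        * (univ.filter (· ∈ borelSubgroup n F)).card
      = ∑ σ : Equiv.Perm (Fin n), (univ.filter (· ∈ bruhatCell n F σ)).card *
          (univ.filter fun T => T ∈ transvections n F ∧
            T * σ.permMatrix F ∈ bruhatCell n F τ).card := by
        rw [Finset.sum_mul]
        refine Finset.sum_congr rfl fun σ _ => ?_
        rw [card_cellF]
        ring
    _ = ∑ σ : Equiv.Perm (Fin n), ∑ M ∈ univ.filter (· ∈ bruhatCell n F σ),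
          (univ.filter fun T => T ∈ transvections n F ∧
            T * M ∈ bruhatCell n F τ).card := by
        refine Finset.sum_congr rfl fun σ _ => ?_
        rw [Finset.sum_congr rfl (hconst σ), Finset.sum_const, smul_eq_mul]
    _ = ∑ M ∈ (Finset.univ : Finset (Equiv.Perm (Fin n))).biUnion
          (fun σ => univ.filter (· ∈ bruhatCell n F σ)),
          (univ.filter fun T => T ∈ transvections n F ∧
            T * M ∈ bruhatCell n F τ).card := by
        rw [Finset.sum_biUnion]
        intro σ _ ρ _ hsr
        exact cells_disjoint hsr
    _ = ∑ M ∈ univ.filter (fun M : Matrix (Fin n) (Fin n) F => IsUnit M.det),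
          (univ.filter fun T => T ∈ transvections n F ∧
            T * M ∈ bruhatCell n F τ).card := by
        rw [biUnion_cells]
    _ = ∑ T ∈ univ.filter (· ∈ transvections n F),
          ((univ.filter fun M : Matrix (Fin n) (Fin n) F => IsUnit M.det).filter
            fun M => T * M ∈ bruhatCell n F τ).card := by
        rw [show (∑ M ∈ univ.filter (fun M : Matrix (Fin n) (Fin n) F => IsUnit M.det),
            (univ.filter fun T => T ∈ transvections n F ∧
              T * M ∈ bruhatCell n F τ).card)
            = ∑ M ∈ univ.filter (fun M : Matrix (Fin n) (Fin n) F => IsUnit M.det),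
              ∑ T : Matrix (Fin n) (Fin n) F,
                if T ∈ transvections n F ∧ T * M ∈ bruhatCell n F τ then 1 else 0 from
          Finset.sum_congr rfl fun M _ => Finset.card_filter _ _]
        rw [Finset.sum_comm]
        rw [← Finset.sum_filter_add_sum_filter_not univ (· ∈ transvections n F)]
        have hzero : ∑ T ∈ univ.filter (¬ · ∈ transvections n F),
            ∑ M ∈ univ.filter (fun M : Matrix (Fin n) (Fin n) F => IsUnit M.det),
              (if T ∈ transvections n F ∧ T * M ∈ bruhatCell n F τ then 1 else 0) = 0 := by
          refine Finset.sum_eq_zero fun T hT => Finset.sum_eq_zero fun M _ => ?_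
          rw [Finset.mem_filter] at hT
          rw [if_neg (fun hc => hT.2 hc.1)]
        rw [hzero, add_zero]
        refine Finset.sum_congr rfl fun T hT => ?_
        rw [Finset.mem_filter] at hT
        rw [show (∑ M ∈ univ.filter (fun M : Matrix (Fin n) (Fin n) F => IsUnit M.det),
            if T ∈ transvections n F ∧ T * M ∈ bruhatCell n F τ then 1 else 0)
            = ∑ M ∈ univ.filter (fun M : Matrix (Fin n) (Fin n) F => IsUnit M.det),
            if T * M ∈ bruhatCell n F τ then 1 else 0 from
          Finset.sum_congr rfl fun M _ => if_congr (and_iff_right hT.2) rfl rfl]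
        rw [← Finset.sum_filter]
        simp
    _ = ∑ _T ∈ univ.filter (· ∈ transvections n F),
          (univ.filter (· ∈ bruhatCell n F τ)).card := by
        refine Finset.sum_congr rfl fun T hT => ?_
        rw [Finset.mem_filter] at hT
        exact card_GL_filter_mul hT.2 τ
    _ = Fintype.card F ^ inversions n τ *
          (univ.filter (· ∈ transvections n F)).card
        * (univ.filter (· ∈ borelSubgroup n F)).card := by
        rw [Finset.sum_const, smul_eq_mul, card_cellF]
        ring
end

section
/- Let q be a real number with q > 1, let n ≥ 1, and for a partition λ of n set β_λ = ((q−1)/((qⁿ−1)(q^{n−1}−1))) · (q^{n−1} ∑_{b∈λ} q^{c(b)} − (qⁿ−1)/(q−1)). If λ and μ are partitions of n with λ ⊴ μ in the dominance (majorization) order, then ∑_{b∈λ} q^{c(b)} ≤ ∑_{b∈μ} q^{c(b)}, and hence β_λ ≤ β_μ. -/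
/-- `∑_{b ∈ λ} q^{c(b)}`, where the box `b` in row `i` and column `j` of the Young diagram
has content `c(b) = j − i`. -/
noncomputable def contentSum (q : ℝ) (μ : YoungDiagram) : ℝ :=
  ∑ b ∈ μ.cells, q ^ ((b.2 : ℤ) - (b.1 : ℤ))

/-- The eigenvalue `β_λ` of the transvection walk on `GL_n(q)` lumped to `B\GL_n(q)/B`,
indexed by the partition `λ ⊢ n`:
`β_λ = ((q−1)/((qⁿ−1)(q^{n−1}−1))) (q^{n−1} ∑_{b∈λ} q^{c(b)} − (qⁿ−1)/(q−1))`. -/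
noncomputable def betaEV (q : ℝ) (n : ℕ) (μ : YoungDiagram) : ℝ :=
  ((q - 1) / ((q ^ n - 1) * (q ^ (n - 1) - 1)))
    * (q ^ (n - 1) * contentSum q μ - (q ^ n - 1) / (q - 1))

/-- Rows at index `≥ n` are empty when the diagram has `n` cells. -/
lemma rowLen_eq_zero_of_card {μ : YoungDiagram} {n i : ℕ}
    (hμ : μ.cells.card = n) (hi : n ≤ i) : μ.rowLen i = 0 := by
  by_contra h
  have hpos : 0 < μ.rowLen i := Nat.pos_of_ne_zero h
  have hsub : (Finset.range (i + 1)).image (fun k => (k, 0)) ⊆ μ.cells := by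
    intro b hb
    simp only [Finset.mem_image, Finset.mem_range] at hb
    obtain ⟨k, hk, rfl⟩ := hb
    rw [YoungDiagram.mem_cells, YoungDiagram.mem_iff_lt_rowLen]
    exact lt_of_lt_of_le hpos (μ.rowLen_anti k i (Nat.lt_succ_iff.mp hk))
  have hcard := Finset.card_le_card hsub
  rw [Finset.card_image_of_injective _ (fun a b hab => by simpa using hab),
    Finset.card_range, hμ] at hcard
  omega

lemma cells_eq_biUnion {μ : YoungDiagram} {n : ℕ}
    (h0 : ∀ i, n ≤ i → μ.rowLen i = 0) :
    μ.cells = (Finset.range n).biUnion μ.row := by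
  ext ⟨i, j⟩
  simp only [Finset.mem_biUnion, Finset.mem_range, YoungDiagram.mem_row_iff,
    YoungDiagram.mem_cells]
  constructor
  · intro hij
    refine ⟨i, ?_, hij, rfl⟩
    by_contra hin
    push_neg at hin
    have := h0 i hin
    rw [YoungDiagram.mem_iff_lt_rowLen, this] at hij
    omega
  · rintro ⟨k, _, hmem, rfl⟩
    exact hmem

lemma rows_pairwise_disjoint (μ : YoungDiagram) (s : Finset ℕ) :
    (s : Set ℕ).PairwiseDisjoint μ.row := by
  intro a _ b _ hab
  simp only [Function.onFun]
  rw [Finset.disjoint_left]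
  intro c hc hc'
  rw [YoungDiagram.mem_row_iff] at hc hc'
  exact hab (hc.2 ▸ hc'.2.symm ▸ rfl)

lemma sum_cells_eq {μ : YoungDiagram} {n : ℕ}
    (h0 : ∀ i, n ≤ i → μ.rowLen i = 0) (f : ℕ × ℕ → ℝ) :
    ∑ b ∈ μ.cells, f b
      = ∑ i ∈ Finset.range n, ∑ j ∈ Finset.range (μ.rowLen i), f (i, j) := by
  rw [cells_eq_biUnion h0, Finset.sum_biUnion (rows_pairwise_disjoint μ _)]
  refine Finset.sum_congr rfl fun i _ => ?_
  rw [YoungDiagram.row_eq_prod, Finset.sum_product, Finset.sum_singleton]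

lemma card_eq_sum_rowLen {μ : YoungDiagram} {n : ℕ}
    (h0 : ∀ i, n ≤ i → μ.rowLen i = 0) :
    μ.cells.card = ∑ i ∈ Finset.range n, μ.rowLen i := by
  rw [cells_eq_biUnion h0, Finset.card_biUnion]
  · exact Finset.sum_congr rfl fun i _ => (μ.rowLen_eq_card).symm
  · intro a ha b hb hab
    exact rows_pairwise_disjoint μ (Finset.range n) ha hb hab

/-- contentSum in terms of row lengths. -/
lemma contentSum_eq {q : ℝ} (hq : 1 < q) {μ : YoungDiagram} {n : ℕ}
    (h0 : ∀ i, n ≤ i → μ.rowLen i = 0) :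
    contentSum q μ =
      (∑ i ∈ Finset.range n, q ^ ((μ.rowLen i : ℤ) - (i : ℤ))
        - ∑ i ∈ Finset.range n, q ^ (-(i : ℤ))) / (q - 1) := by
  have hq0 : (0:ℝ) < q := lt_trans one_pos hq
  have hq1 : q ≠ 1 := ne_of_gt hq
  have hqne : q ≠ 0 := ne_of_gt hq0
  rw [contentSum, sum_cells_eq h0]
  have hrow : ∀ i ∈ Finset.range n, ∑ j ∈ Finset.range (μ.rowLen i),
      q ^ (((i, j).2 : ℤ) - ((i, j).1 : ℤ))
      = (q ^ ((μ.rowLen i : ℤ) - (i : ℤ)) - q ^ (-(i : ℤ))) / (q - 1) := by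
    intro i _
    have : ∀ j : ℕ, q ^ ((j : ℤ) - (i : ℤ)) = q ^ (-(i:ℤ)) * q ^ j := by
      intro j
      rw [sub_eq_add_neg, add_comm, zpow_add₀ hqne, zpow_natCast]
    simp only [this]
    rw [← Finset.mul_sum, geom_sum_eq hq1]
    field_simp
  rw [Finset.sum_congr rfl hrow, ← Finset.sum_div, Finset.sum_sub_distrib]

/-- Convexity of `exp`: `q^a (log q) (b - a) ≤ q^b - q^a`. -/
lemma zpow_convex {q : ℝ} (hq : 1 < q) (a b : ℤ) :
    q ^ a * (Real.log q * ((b : ℝ) - (a : ℝ))) ≤ q ^ b - q ^ a := by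
  have hq0 : (0:ℝ) < q := lt_trans one_pos hq
  have hqa : (0:ℝ) < q ^ a := zpow_pos hq0 a
  have hb : (q:ℝ) ^ b = q ^ a * Real.exp (Real.log q * ((b : ℝ) - (a : ℝ))) := by
    rw [← Real.exp_log (zpow_pos hq0 b), ← Real.exp_log hqa, ← Real.exp_add]
    congr 1
    rw [Real.log_zpow, Real.log_zpow]
    push_cast
    ring
  rw [hb]
  have := Real.add_one_le_exp (Real.log q * ((b : ℝ) - (a : ℝ)))
  nlinarith [this, hqa]

/-- The key majorization inequality via Abel summation. -/
lemma key_ineq {q : ℝ} (hq : 1 < q) (n : ℕ) (a b : ℕ → ℤ)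
    (hanti : ∀ i j, i ≤ j → a j ≤ a i)
    (hpart : ∀ k, k ≤ n → ∑ i ∈ Finset.range k, a i ≤ ∑ i ∈ Finset.range k, b i)
    (htot : ∑ i ∈ Finset.range n, a i = ∑ i ∈ Finset.range n, b i) :
    ∑ i ∈ Finset.range n, q ^ (a i) ≤ ∑ i ∈ Finset.range n, q ^ (b i) := by
  have hq0 : (0:ℝ) < q := lt_trans one_pos hq
  have hlog : 0 ≤ Real.log q := Real.log_nonneg (le_of_lt hq)
  set f : ℕ → ℝ := fun i => q ^ (a i) with hf
  set g : ℕ → ℝ := fun i => ((b i : ℝ) - (a i : ℝ)) with hg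
  have hG : ∀ k, k ≤ n → 0 ≤ ∑ i ∈ Finset.range k, g i := by
    intro k hk
    have h := hpart k hk
    have : ((∑ i ∈ Finset.range k, a i : ℤ) : ℝ) ≤ ((∑ i ∈ Finset.range k, b i : ℤ) : ℝ) := by
      exact_mod_cast h
    push_cast at this
    simp only [hg, Finset.sum_sub_distrib]
    linarith
  have hGn : ∑ i ∈ Finset.range n, g i = 0 := by
    have : ((∑ i ∈ Finset.range n, a i : ℤ) : ℝ) = ((∑ i ∈ Finset.range n, b i : ℤ) : ℝ) := by
      exact_mod_cast htot
    push_cast at this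
    simp only [hg, Finset.sum_sub_distrib]
    linarith
  -- Abel summation
  have habel : 0 ≤ ∑ i ∈ Finset.range n, f i * g i := by
    have := Finset.sum_range_by_parts f g n
    simp only [smul_eq_mul] at this
    rw [this, hGn, mul_zero, zero_sub, neg_nonneg]
    apply Finset.sum_nonpos
    intro i hi
    rw [Finset.mem_range] at hi
    have hfi : f (i + 1) ≤ f i :=
      zpow_le_zpow_right₀ (le_of_lt hq) (hanti i (i + 1) (Nat.le_succ i))
    have hGi : 0 ≤ ∑ j ∈ Finset.range (i + 1), g j := hG (i + 1) (by omega)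
    nlinarith
  have hterm : ∀ i, f i * (Real.log q * g i) ≤ q ^ (b i) - q ^ (a i) :=
    fun i => zpow_convex hq (a i) (b i)
  have hsum : Real.log q * ∑ i ∈ Finset.range n, f i * g i
      ≤ ∑ i ∈ Finset.range n, (q ^ (b i) - q ^ (a i)) := by
    rw [Finset.mul_sum]
    apply Finset.sum_le_sum
    intro i _
    calc Real.log q * (f i * g i) = f i * (Real.log q * g i) := by ring
    _ ≤ _ := hterm i
  have : 0 ≤ ∑ i ∈ Finset.range n, (q ^ (b i) - q ^ (a i)) := by
    have := mul_nonneg hlog habel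
    linarith
  rw [Finset.sum_sub_distrib] at this
  linarith

/-- For `q > 1` and partitions `λ ⊴ μ` of `n` in the dominance
(majorization) order, `∑_{b∈λ} q^{c(b)} ≤ ∑_{b∈μ} q^{c(b)}` and hence `β_λ ≤ β_μ`. -/
theorem betaEV_monotone_dominance
    (q : ℝ) (hq : 1 < q) (n : ℕ) (hn : 1 ≤ n) (μ ν : YoungDiagram)
    (hμ : μ.cells.card = n) (hν : ν.cells.card = n)
    (hdom : ∀ k : ℕ, ∑ i ∈ Finset.range k, μ.rowLen i ≤ ∑ i ∈ Finset.range k, ν.rowLen i) :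
    contentSum q μ ≤ contentSum q ν ∧ betaEV q n μ ≤ betaEV q n ν := by
  have hq0 : (0:ℝ) < q := lt_trans one_pos hq
  have h0μ : ∀ i, n ≤ i → μ.rowLen i = 0 := fun i hi => rowLen_eq_zero_of_card hμ hi
  have h0ν : ∀ i, n ≤ i → ν.rowLen i = 0 := fun i hi => rowLen_eq_zero_of_card hν hi
  set a : ℕ → ℤ := fun i => (μ.rowLen i : ℤ) - i with ha
  set b : ℕ → ℤ := fun i => (ν.rowLen i : ℤ) - i with hb
  have hanti : ∀ i j, i ≤ j → a j ≤ a i := by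
    intro i j hij
    have := μ.rowLen_anti i j hij
    simp only [ha]
    omega
  have hpart : ∀ k, k ≤ n → ∑ i ∈ Finset.range k, a i ≤ ∑ i ∈ Finset.range k, b i := by
    intro k _
    simp only [ha, hb, Finset.sum_sub_distrib]
    have := hdom k
    have : ((∑ i ∈ Finset.range k, μ.rowLen i : ℕ) : ℤ)
        ≤ ((∑ i ∈ Finset.range k, ν.rowLen i : ℕ) : ℤ) := by exact_mod_cast this
    push_cast at this
    omega
  have htot : ∑ i ∈ Finset.range n, a i = ∑ i ∈ Finset.range n, b i := by
    simp only [ha, hb, Finset.sum_sub_distrib]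
    have h1 : ∑ i ∈ Finset.range n, μ.rowLen i = n := by
      rw [← card_eq_sum_rowLen h0μ, hμ]
    have h2 : ∑ i ∈ Finset.range n, ν.rowLen i = n := by
      rw [← card_eq_sum_rowLen h0ν, hν]
    have h1' : ((∑ i ∈ Finset.range n, μ.rowLen i : ℕ) : ℤ) = n := by exact_mod_cast h1
    have h2' : ((∑ i ∈ Finset.range n, ν.rowLen i : ℕ) : ℤ) = n := by exact_mod_cast h2
    push_cast at h1' h2'
    omega
  have hkey := key_ineq hq n a b hanti hpart htot
  have hcs : contentSum q μ ≤ contentSum q ν := by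
    rw [contentSum_eq hq h0μ, contentSum_eq hq h0ν]
    apply div_le_div_of_nonneg_right _ (by linarith)
    · simp only [ha, hb] at hkey
      linarith
  refine ⟨hcs, ?_⟩
  rw [betaEV, betaEV]
  have hc : 0 ≤ (q - 1) / ((q ^ n - 1) * (q ^ (n - 1) - 1)) := by
    apply div_nonneg (by linarith)
    have h1 : (1:ℝ) ≤ q ^ n := one_le_pow₀ (le_of_lt hq)
    have h2 : (1:ℝ) ≤ q ^ (n - 1) := one_le_pow₀ (le_of_lt hq)
    apply mul_nonneg <;> linarith
  apply mul_le_mul_of_nonneg_left _ hc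
  apply sub_le_sub_right
  apply mul_le_mul_of_nonneg_left hcs (pow_nonneg (le_of_lt hq0) _)
end

section
/- Let q ≥ 2 be a real number and let n, j be integers with n ≥ 2 and 1 ≤ j ≤ n/2. Then (q^j (q^{n−j−1} − 1)(q^{n−j} − 1) + (q^{n−2} − 1)(q^j − 1)) / ((q^{n−1} − 1)(qⁿ − 1)) ≤ q^{−j} (1 + q^{−(n−2j+1)})(1 + q^{−(n−1)})(1 + q^{−(n−2)}). (The left side equals β_{(n−j,j)}, the eigenvalue of the lumped transvection chain indexed by the two-row partition (n−j, j).) -/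
/-- For real `q ≥ 2` and integers `n ≥ 2`, `1 ≤ j ≤ n/2`:
`(q^j (q^{n−j−1} − 1)(q^{n−j} − 1) + (q^{n−2} − 1)(q^j − 1)) / ((q^{n−1} − 1)(qⁿ − 1))
  ≤ q^{−j} (1 + q^{−(n−2j+1)})(1 + q^{−(n−1)})(1 + q^{−(n−2)})`.
The left-hand side is the eigenvalue `β_{(n−j,j)}` of the lumped transvection chain. -/
theorem beta_two_row_upper_bound
    (q : ℝ) (hq : 2 ≤ q) (n j : ℕ) (hn : 2 ≤ n) (hj : 1 ≤ j) (hjn : 2 * j ≤ n) :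
    (q ^ (j : ℤ) * (q ^ ((n : ℤ) - j - 1) - 1) * (q ^ ((n : ℤ) - j) - 1)
          + (q ^ ((n : ℤ) - 2) - 1) * (q ^ (j : ℤ) - 1))
        / ((q ^ ((n : ℤ) - 1) - 1) * (q ^ (n : ℤ) - 1))
      ≤ q ^ (-(j : ℤ)) * (1 + q ^ (-((n : ℤ) - 2 * j + 1)))
          * (1 + q ^ (-((n : ℤ) - 1))) * (1 + q ^ (-((n : ℤ) - 2))) := by
  have hq1 : (1 : ℝ) < q := by linarith
  have hq0 : (0 : ℝ) < q := by linarith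
  have hqne : q ≠ 0 := hq0.ne'
  have hjZ : (1 : ℤ) ≤ (j : ℤ) := by exact_mod_cast hj
  have hnZ : (2 : ℤ) ≤ (n : ℤ) := by exact_mod_cast hn
  have hjnZ : 2 * (j : ℤ) ≤ (n : ℤ) := by exact_mod_cast hjn
  -- basic zpow facts
  have hle : ∀ m : ℤ, 0 ≤ m → 1 ≤ q ^ m := fun m hm => one_le_zpow₀ hq1.le hm
  have hlt : ∀ m : ℤ, 0 < m → 1 < q ^ m := fun m hm => one_lt_zpow₀ hq1 hm
  have hpos : ∀ m : ℤ, 0 < q ^ m := fun m => zpow_pos hq0 m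
  -- denominator positivity
  have hD1 : (0 : ℝ) < q ^ ((n : ℤ) - 1) - 1 := by
    have := hlt ((n : ℤ) - 1) (by omega); linarith
  have hD2 : (0 : ℝ) < q ^ ((n : ℤ)) - 1 := by
    have := hlt (n : ℤ) (by omega); linarith
  have hD : (0 : ℝ) < (q ^ ((n : ℤ) - 1) - 1) * (q ^ (n : ℤ) - 1) := mul_pos hD1 hD2
  -- product-of-powers identities
  have hmul : ∀ a b : ℤ, q ^ a * q ^ b = q ^ (a + b) := fun a b => (zpow_add₀ hqne a b).symm
  -- Bound the first numerator term: q^j*(q^(n-j-1)-1)*(q^(n-j)-1) ≤ q^(-j) * D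
  have key1 : q ^ (j : ℤ) * (q ^ ((n : ℤ) - j - 1) - 1) * (q ^ ((n : ℤ) - j) - 1)
      ≤ q ^ (-(j : ℤ)) * ((q ^ ((n : ℤ) - 1) - 1) * (q ^ (n : ℤ) - 1)) := by
    have e1 : q ^ (j : ℤ) * (q ^ ((n : ℤ) - j - 1) - 1) = q ^ ((n : ℤ) - 1) - q ^ (j : ℤ) := by
      rw [mul_sub, mul_one, hmul]; congr 2; ring
    have e2 : q ^ (j : ℤ) * (q ^ ((n : ℤ) - j) - 1) = q ^ (n : ℤ) - q ^ (j : ℤ) := by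
      rw [mul_sub, mul_one, hmul]; congr 2; ring
    have lhs_eq : q ^ (j : ℤ) * (q ^ ((n : ℤ) - j - 1) - 1) * (q ^ ((n : ℤ) - j) - 1)
        = q ^ (-(j : ℤ)) * ((q ^ ((n : ℤ) - 1) - q ^ (j : ℤ)) * (q ^ (n : ℤ) - q ^ (j : ℤ))) := by
      rw [← e1, ← e2]
      have : q ^ (-(j : ℤ)) * q ^ (j : ℤ) * q ^ (j : ℤ) = q ^ (j : ℤ) := by
        rw [hmul, hmul]; congr 1; ring
      calc q ^ (j : ℤ) * (q ^ ((n : ℤ) - j - 1) - 1) * (q ^ ((n : ℤ) - j) - 1)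
          = (q ^ (-(j : ℤ)) * q ^ (j : ℤ) * q ^ (j : ℤ)) * (q ^ ((n : ℤ) - j - 1) - 1)
              * (q ^ ((n : ℤ) - j) - 1) := by rw [this]
        _ = q ^ (-(j : ℤ)) * ((q ^ (j : ℤ) * (q ^ ((n : ℤ) - j - 1) - 1))
              * (q ^ (j : ℤ) * (q ^ ((n : ℤ) - j) - 1))) := by ring
    rw [lhs_eq]
    have hjge : (1 : ℝ) ≤ q ^ (j : ℤ) := hle _ (by omega)
    have f1 : q ^ ((n : ℤ) - 1) - q ^ (j : ℤ) ≤ q ^ ((n : ℤ) - 1) - 1 := by linarith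
    have f2 : q ^ (n : ℤ) - q ^ (j : ℤ) ≤ q ^ (n : ℤ) - 1 := by linarith
    have g1 : (0 : ℝ) ≤ q ^ ((n : ℤ) - 1) - q ^ (j : ℤ) := by
      have := hmul (j : ℤ) ((n : ℤ) - j - 1)
      have h1 : (1:ℝ) ≤ q ^ ((n : ℤ) - j - 1) := hle _ (by omega)
      nlinarith [hpos (j : ℤ), e1]
    have g2 : (0 : ℝ) ≤ q ^ (n : ℤ) - q ^ (j : ℤ) := by
      have h1 : (1:ℝ) ≤ q ^ ((n : ℤ) - j) := hle _ (by omega)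
      nlinarith [hpos (j : ℤ), e2]
    exact mul_le_mul_of_nonneg_left
      (mul_le_mul f1 f2 g2 (by linarith)) (hpos _).le
  -- Bound the second numerator term: (q^(n-2)-1)*(q^j-1) ≤ q^(j-n-1) * D
  have key2 : (q ^ ((n : ℤ) - 2) - 1) * (q ^ (j : ℤ) - 1)
      ≤ q ^ ((j : ℤ) - n - 1) * ((q ^ ((n : ℤ) - 1) - 1) * (q ^ (n : ℤ) - 1)) := by
    have hqq : q * q ^ ((n : ℤ) - 2) = q ^ ((n : ℤ) - 1) := by
      rw [show (n : ℤ) - 1 = 1 + ((n : ℤ) - 2) by ring, zpow_one_add₀ hqne]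
    have e1 : q * (q ^ ((n : ℤ) - 2) - 1) = q ^ ((n : ℤ) - 1) - q := by
      rw [mul_sub, mul_one, hqq]
    have e2 : q ^ ((n : ℤ) - j) * (q ^ (j : ℤ) - 1) = q ^ (n : ℤ) - q ^ ((n : ℤ) - j) := by
      rw [mul_sub, mul_one, hmul]; congr 2; ring
    have lhs_eq : (q ^ ((n : ℤ) - 2) - 1) * (q ^ (j : ℤ) - 1)
        = q ^ ((j : ℤ) - n - 1) * ((q ^ ((n : ℤ) - 1) - q)
            * (q ^ (n : ℤ) - q ^ ((n : ℤ) - j))) := by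
      rw [← e1, ← e2]
      have hone : q ^ ((j : ℤ) - n - 1) * q * q ^ ((n : ℤ) - j) = 1 := by
        rw [← zpow_add_one₀ hqne, hmul]
        have h0 : (j : ℤ) - n - 1 + 1 + ((n : ℤ) - j) = 0 := by ring
        rw [h0, zpow_zero]
      calc (q ^ ((n : ℤ) - 2) - 1) * (q ^ (j : ℤ) - 1)
          = (q ^ ((j : ℤ) - n - 1) * q * q ^ ((n : ℤ) - j))
              * ((q ^ ((n : ℤ) - 2) - 1) * (q ^ (j : ℤ) - 1)) := by rw [hone]; ring
        _ = q ^ ((j : ℤ) - n - 1) * ((q * (q ^ ((n : ℤ) - 2) - 1))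
              * (q ^ ((n : ℤ) - j) * (q ^ (j : ℤ) - 1))) := by ring
    rw [lhs_eq]
    have hnj1 : (1 : ℝ) ≤ q ^ ((n : ℤ) - j) := hle _ (by omega)
    have f1 : q ^ ((n : ℤ) - 1) - q ≤ q ^ ((n : ℤ) - 1) - 1 := by linarith
    have f2 : q ^ (n : ℤ) - q ^ ((n : ℤ) - j) ≤ q ^ (n : ℤ) - 1 := by linarith
    have g1 : (0 : ℝ) ≤ q ^ ((n : ℤ) - 1) - q := by
      have h1 : (1:ℝ) ≤ q ^ ((n : ℤ) - 2) := hle _ (by omega)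
      nlinarith [e1]
    have g2 : (0 : ℝ) ≤ q ^ (n : ℤ) - q ^ ((n : ℤ) - j) := by
      have h1 : (1:ℝ) ≤ q ^ (j : ℤ) := hle _ (by omega)
      nlinarith [hpos ((n : ℤ) - j), e2]
    exact mul_le_mul_of_nonneg_left
      (mul_le_mul f1 f2 g2 (by linarith)) (hpos _).le
  -- Combine: LHS ≤ q^(-j) + q^(j-n-1)
  have step1 : (q ^ (j : ℤ) * (q ^ ((n : ℤ) - j - 1) - 1) * (q ^ ((n : ℤ) - j) - 1)
          + (q ^ ((n : ℤ) - 2) - 1) * (q ^ (j : ℤ) - 1))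
        / ((q ^ ((n : ℤ) - 1) - 1) * (q ^ (n : ℤ) - 1))
      ≤ q ^ (-(j : ℤ)) + q ^ ((j : ℤ) - n - 1) := by
    rw [div_le_iff₀ hD, add_mul]
    linarith [key1, key2]
  refine step1.trans ?_
  -- RHS: the first two factors multiply out to exactly q^(-j) + q^(j-n-1),
  -- and the remaining factors are ≥ 1.
  have firsttwo : q ^ (-(j : ℤ)) * (1 + q ^ (-((n : ℤ) - 2 * j + 1)))
      = q ^ (-(j : ℤ)) + q ^ ((j : ℤ) - n - 1) := by
    rw [mul_add, mul_one, hmul]; congr 2; ring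
  have hT0 : (0 : ℝ) ≤ q ^ (-(j : ℤ)) + q ^ ((j : ℤ) - n - 1) := by
    have := hpos (-(j : ℤ)); have := hpos ((j : ℤ) - n - 1); linarith
  have h3 : (1 : ℝ) ≤ 1 + q ^ (-((n : ℤ) - 1)) := by have := hpos (-((n : ℤ) - 1)); linarith
  have h4 : (1 : ℝ) ≤ 1 + q ^ (-((n : ℤ) - 2)) := by have := hpos (-((n : ℤ) - 2)); linarith
  calc q ^ (-(j : ℤ)) + q ^ ((j : ℤ) - n - 1)
      = q ^ (-(j : ℤ)) * (1 + q ^ (-((n : ℤ) - 2 * j + 1))) := firsttwo.symm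
    _ ≤ q ^ (-(j : ℤ)) * (1 + q ^ (-((n : ℤ) - 2 * j + 1))) * (1 + q ^ (-((n : ℤ) - 1))) := by
        refine le_mul_of_one_le_right ?_ h3; rw [firsttwo]; exact hT0
    _ ≤ q ^ (-(j : ℤ)) * (1 + q ^ (-((n : ℤ) - 2 * j + 1))) * (1 + q ^ (-((n : ℤ) - 1)))
          * (1 + q ^ (-((n : ℤ) - 2))) := by
        refine le_mul_of_one_le_right ?_ h4
        refine mul_nonneg ?_ (by linarith)
        rw [firsttwo]; exact hT0
end

section
/- Let q ≥ 2 be a real number and let n, j be integers with 1 ≤ j and 2j ≤ n. Then log((1 + q^{−(n−2j+1)})(1 + q^{−(n−1)})(1 + q^{−(n−2)})) ≤ 6j/n. In particular, with κ_{n,q,j} = (1 + q^{−(n−2j+1)})(1 + q^{−(n−1)})(1 + q^{−(n−2)}), the quantity α_{n,q} = max_{1 ≤ j ≤ n/2} log(κ_{n,q,j})/j satisfies α_{n,q} ≤ 6/n. -/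
lemma zpow_le_zpow_base (q : ℝ) (hq : 2 ≤ q) (e : ℤ) (he : e ≤ 0) :
    q ^ e ≤ (2:ℝ) ^ e := by
  obtain ⟨k, rfl⟩ : ∃ k : ℕ, e = -(k:ℤ) := ⟨(-e).toNat, by omega⟩
  rw [zpow_neg, zpow_neg, zpow_natCast, zpow_natCast]
  exact inv_anti₀ (by positivity) (pow_le_pow_left₀ (by norm_num) hq k)

/-- For real `q ≥ 2` and integers `1 ≤ j`, `2j ≤ n`:
`log((1 + q^{−(n−2j+1)})(1 + q^{−(n−1)})(1 + q^{−(n−2)})) ≤ 6j/n`.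
In particular `α_{n,q} = max_{1 ≤ j ≤ n/2} log(κ_{n,q,j})/j ≤ 6/n`. -/
theorem log_kappa_le
    (q : ℝ) (hq : 2 ≤ q) (n j : ℕ) (hj : 1 ≤ j) (hjn : 2 * j ≤ n) :
    Real.log ((1 + q ^ (-((n : ℤ) - 2 * j + 1))) * (1 + q ^ (-((n : ℤ) - 1)))
        * (1 + q ^ (-((n : ℤ) - 2))))
      ≤ 6 * j / n := by
  have hq0 : (0:ℝ) < q := by linarith
  have hn2 : 2 ≤ n := le_trans (by omega) hjn
  set e1 : ℤ := -((n : ℤ) - 2 * j + 1) with he1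
  set e2 : ℤ := -((n : ℤ) - 1) with he2
  set e3 : ℤ := -((n : ℤ) - 2) with he3
  have hx1 : (0:ℝ) < q ^ e1 := zpow_pos hq0 _
  have hx2 : (0:ℝ) < q ^ e2 := zpow_pos hq0 _
  have hx3 : (0:ℝ) < q ^ e3 := zpow_pos hq0 _
  have hcast : (1:ℝ) ≤ (j:ℝ) := by exact_mod_cast hj
  -- log of each factor is at most the corresponding power
  have hlog : ∀ x : ℝ, 0 < x → Real.log (1 + x) ≤ x := by
    intro x hx
    have := Real.log_le_sub_one_of_pos (by linarith : (0:ℝ) < 1 + x)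
    linarith
  have hsplit : Real.log ((1 + q ^ e1) * (1 + q ^ e2) * (1 + q ^ e3))
      = Real.log (1 + q ^ e1) + Real.log (1 + q ^ e2) + Real.log (1 + q ^ e3) := by
    rw [Real.log_mul (by positivity) (by positivity), Real.log_mul (by positivity) (by positivity)]
  rw [hsplit]
  have hsum : Real.log (1 + q ^ e1) + Real.log (1 + q ^ e2) + Real.log (1 + q ^ e3)
      ≤ q ^ e1 + q ^ e2 + q ^ e3 := by
    have := hlog _ hx1; have := hlog _ hx2; have := hlog _ hx3; linarith
  -- bound each power by 2 ^ (-(n - 2j))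
  set m : ℕ := n - 2 * j with hm
  have hmn : (n : ℤ) = 2 * j + m := by omega
  have hb : ∀ e : ℤ, e ≤ -(m:ℤ) → q ^ e ≤ (2:ℝ) ^ (-(m:ℤ)) := by
    intro e he
    calc q ^ e ≤ (2:ℝ) ^ e := zpow_le_zpow_base q hq e (by omega)
    _ ≤ (2:ℝ) ^ (-(m:ℤ)) := zpow_le_zpow_right₀ (by norm_num) he
  have hb1 : q ^ e1 ≤ (2:ℝ) ^ (-(m:ℤ)) := hb e1 (by omega)
  have hb2 : q ^ e2 ≤ (2:ℝ) ^ (-(m:ℤ)) := hb e2 (by omega)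
  have hb3 : q ^ e3 ≤ (2:ℝ) ^ (-(m:ℤ)) := hb e3 (by omega)
  -- final arithmetic: 3 * 2^(-m) ≤ 6j/n
  have hfin : 3 * (2:ℝ) ^ (-(m:ℤ)) ≤ 6 * j / n := by
    rw [zpow_neg, zpow_natCast]
    have hpow : (0:ℝ) < (2:ℝ) ^ m := by positivity
    have hnpos : (0:ℝ) < (n:ℝ) := by exact_mod_cast (by omega : 0 < n)
    have hnat : n ≤ 2 * j * 2 ^ m := by
      have h2m : m < 2 ^ m := Nat.lt_two_pow_self (n := m)
      have hneq : n = 2 * j + m := by omega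
      nlinarith [hj, h2m]
    have hcast2 : (n:ℝ) ≤ 2 * j * 2 ^ m := by exact_mod_cast hnat
    rw [show (3:ℝ) * ((2:ℝ)^m)⁻¹ = 3 / 2^m by ring, div_le_div_iff₀ hpow hnpos]
    nlinarith [hcast2]
  calc Real.log (1 + q ^ e1) + Real.log (1 + q ^ e2) + Real.log (1 + q ^ e3)
      ≤ q ^ e1 + q ^ e2 + q ^ e3 := hsum
    _ ≤ 3 * (2:ℝ) ^ (-(m:ℤ)) := by linarith
    _ ≤ 6 * j / n := hfin
end

section
/- Let n ≥ 1 and 1 ≤ j ≤ n be integers. Then ∑_{λ} f_λ² ≤ n^{2j} / j!, where the sum is over all partitions λ of n whose largest part equals n − j, and f_λ is the number of standard Young tableaux of shape λ. -/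
/-- `f_λ`: the number of standard Young tableaux of shape `μ`, formalized as the number of
bijective labellings of the cells of `μ` by `0, 1, …, n−1` whose entries strictly increase
along rows and down columns (equivalently, strictly increase in the componentwise order on
cells). -/
noncomputable def numSYT (μ : YoungDiagram) : ℕ :=
  Nat.card {T : ↥μ.cells ≃ Fin μ.cells.card //
    ∀ c₁ c₂ : ↥μ.cells, (c₁ : ℕ × ℕ).1 ≤ (c₂ : ℕ × ℕ).1 → (c₁ : ℕ × ℕ).2 ≤ (c₂ : ℕ × ℕ).2 →
      c₁ ≠ c₂ → T c₁ < T c₂}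

namespace SYTAux
open YoungDiagram Finset

instance : DecidableEq YoungDiagram := fun μ ν =>
  decidable_of_iff (μ.cells = ν.cells) ⟨fun h => by ext c; rw [h], fun h => by rw [h]⟩

/-- Rows where a cell can be added. -/
def addRows (μ : YoungDiagram) : Finset ℕ :=
  (Finset.range (μ.colLen 0 + 1)).filter fun i => i = 0 ∨ μ.rowLen i < μ.rowLen (i - 1)

/-- Rows where a cell can be removed. -/
def remRows (μ : YoungDiagram) : Finset ℕ :=
  (Finset.range (μ.colLen 0)).filter fun i => μ.rowLen (i + 1) < μ.rowLen i

lemma rowLen_pos_iff {μ : YoungDiagram} {i : ℕ} : 0 < μ.rowLen i ↔ i < μ.colLen 0 := by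
  rw [← YoungDiagram.mem_iff_lt_rowLen, YoungDiagram.mem_iff_lt_colLen]

lemma addRows_eq (μ : YoungDiagram) :
    addRows μ = insert 0 ((remRows μ).image Nat.succ) := by
  ext i
  simp only [addRows, remRows, mem_insert, mem_image, mem_filter, mem_range]
  constructor
  · rintro ⟨hr, h0 | hlt⟩
    · exact Or.inl h0
    · rcases Nat.eq_zero_or_pos i with h0 | hpos
      · exact Or.inl h0
      · refine Or.inr ⟨i - 1, ⟨?_, ?_⟩, by omega⟩
        · have : 0 < μ.rowLen (i - 1) := by omega
          exact rowLen_pos_iff.mp this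
        · have h1 : i - 1 + 1 = i := by omega
          rw [h1]; exact hlt
  · rintro (h0 | ⟨i', ⟨hi', hlt⟩, rfl⟩)
    · exact ⟨by omega, Or.inl h0⟩
    · constructor
      · have h2 : 0 < μ.rowLen i' := by omega
        have := rowLen_pos_iff.mp h2
        omega
      · right
        simpa using hlt

lemma card_addRows (μ : YoungDiagram) : (addRows μ).card = (remRows μ).card + 1 := by
  rw [addRows_eq, card_insert_of_notMem, card_image_of_injective _ Nat.succ_injective]
  simp

lemma zero_mem_addRows (μ : YoungDiagram) : 0 ∈ addRows μ := by
  simp [addRows]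

lemma not_mem_self_add (μ : YoungDiagram) (i : ℕ) : (i, μ.rowLen i) ∉ μ.cells := by
  rw [mem_cells, YoungDiagram.mem_iff_lt_rowLen]; omega

/-- Add a cell at the end of row `i`. -/
def addCell (μ : YoungDiagram) (i : ℕ) (h : i ∈ addRows μ) : YoungDiagram :=
  ⟨insert (i, μ.rowLen i) μ.cells, by
    rw [coe_insert]
    intro y x hxy hy
    simp only [Set.mem_insert_iff, mem_coe, mem_cells] at hy ⊢
    rcases hy with hy | hy
    · subst hy
      rcases eq_or_ne x (i, μ.rowLen i) with rfl | hne
      · exact Or.inl rfl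
      · right
        obtain ⟨h1, h2⟩ := Prod.le_def.mp hxy
        simp only at h1 h2
        simp only [addRows, mem_filter, mem_range] at h
        rcases Nat.lt_or_ge x.1 i with hlt | hge
        · have hi0 : i ≠ 0 := by omega
          have hrow : μ.rowLen i < μ.rowLen (i - 1) := h.2.resolve_left hi0
          have hanti : μ.rowLen (i - 1) ≤ μ.rowLen x.1 := μ.rowLen_anti _ _ (by omega)
          rw [YoungDiagram.mem_iff_lt_rowLen]
          omega
        · have hx1 : x.1 = i := le_antisymm h1 hge
          have hx2 : x.2 < μ.rowLen i := by
            rcases Nat.lt_or_ge x.2 (μ.rowLen i) with h' | h'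
            · exact h'
            · exact absurd (Prod.ext hx1 (le_antisymm h2 h')) hne
          rw [YoungDiagram.mem_iff_lt_rowLen, hx1]
          omega
    · exact Or.inr (μ.isLowerSet hxy hy)⟩

/-- Remove the last cell of row `i`. -/
def remCell (μ : YoungDiagram) (i : ℕ) (h : i ∈ remRows μ) : YoungDiagram :=
  ⟨μ.cells.erase (i, μ.rowLen i - 1), by
    intro y x hxy hy
    simp only [coe_erase, Set.mem_diff, mem_coe, mem_cells, Set.mem_singleton_iff] at hy ⊢
    refine ⟨μ.isLowerSet hxy hy.1, ?_⟩
    intro hx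
    subst hx
    simp only [remRows, mem_filter, mem_range] at h
    obtain ⟨h1, h2⟩ := Prod.le_def.mp hxy
    simp only at h1 h2
    have hy1 : y ∈ μ := hy.1
    rw [YoungDiagram.mem_iff_lt_rowLen] at hy1
    apply hy.2
    rcases Nat.lt_or_ge i y.1 with hlt | hge
    · exfalso
      have : μ.rowLen y.1 ≤ μ.rowLen (i + 1) := μ.rowLen_anti _ _ (by omega)
      omega
    · have hyi : y.1 = i := le_antisymm hge h1
      rw [hyi] at hy1
      refine Prod.ext hyi ?_
      simp only
      omega⟩

def up (μ : YoungDiagram) : Finset YoungDiagram :=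
  (addRows μ).attach.image fun i => addCell μ i.1 i.2

def down (μ : YoungDiagram) : Finset YoungDiagram :=
  (remRows μ).attach.image fun i => remCell μ i.1 i.2

lemma rowLen_mem {μ : YoungDiagram} {i : ℕ} (h : i ∈ remRows μ) :
    (i, μ.rowLen i - 1) ∈ μ.cells := by
  simp only [remRows, mem_filter, mem_range] at h
  rw [mem_cells, YoungDiagram.mem_iff_lt_rowLen]
  omega

lemma mem_up {μ ν : YoungDiagram} :
    ν ∈ up μ ↔ μ ≤ ν ∧ ν.cells.card = μ.cells.card + 1 := by
  constructor
  · rintro hν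
    rw [up, mem_image] at hν
    obtain ⟨⟨i, hi⟩, _, rfl⟩ := hν
    constructor
    · intro c hc
      simp only [addCell, mem_cells, YoungDiagram.mem_mk, mem_insert]
      exact Or.inr hc
    · exact card_insert_of_notMem (not_mem_self_add μ i)
  · rintro ⟨hle, hcard⟩
    have hsub : μ.cells ⊆ ν.cells := hle
    have hd : (ν.cells \ μ.cells).card = 1 := by
      rw [card_sdiff_of_subset hsub]; omega
    obtain ⟨c, hc⟩ := card_eq_one.mp hd
    have hcmem : c ∈ ν.cells ∧ c ∉ μ.cells := by
      have h' : c ∈ ν.cells \ μ.cells := by rw [hc]; exact mem_singleton_self c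
      exact ⟨(mem_sdiff.mp h').1, (mem_sdiff.mp h').2⟩
    have hcells : ν.cells = insert c μ.cells := by
      have h1 : μ.cells ∪ ν.cells \ μ.cells = ν.cells := union_sdiff_of_subset hsub
      rw [hc] at h1
      rw [← h1, union_comm, insert_eq]
    have hbelow : ∀ x : ℕ × ℕ, x ≤ c → x ≠ c → x ∈ μ.cells := by
      intro x hx hne
      have hxν' : x ∈ ν.cells := Finset.mem_coe.mp (ν.isLowerSet hx (Finset.mem_coe.mpr hcmem.1))
      rw [hcells, mem_insert] at hxν'
      exact hxν'.resolve_left hne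
    have hc2 : c.2 = μ.rowLen c.1 := by
      have hle2 : c.2 ≤ μ.rowLen c.1 := by
        rcases Nat.eq_zero_or_pos c.2 with h0 | hpos
        · omega
        · have hm : (c.1, c.2 - 1) ∈ μ.cells := by
            apply hbelow
            · exact Prod.le_def.mpr ⟨le_refl _, by show c.2 - 1 ≤ c.2; omega⟩
            · intro h
              have := congrArg Prod.snd h
              simp only at this
              omega
          rw [mem_cells, YoungDiagram.mem_iff_lt_rowLen] at hm
          omega
      have hge2 : μ.rowLen c.1 ≤ c.2 := by
        by_contra h
        push_neg at h
        exact hcmem.2 (by rw [mem_cells, YoungDiagram.mem_iff_lt_rowLen]; exact h)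
      omega
    have haddrow : c.1 ∈ addRows μ := by
      simp only [addRows, mem_filter, mem_range]
      rcases Nat.eq_zero_or_pos c.1 with h0 | hpos
      · exact ⟨by omega, Or.inl h0⟩
      · have hm : (c.1 - 1, c.2) ∈ μ.cells := by
          apply hbelow
          · exact Prod.le_def.mpr ⟨by show c.1 - 1 ≤ c.1; omega, le_refl _⟩
          · intro h
            have := congrArg Prod.fst h
            simp only at this
            omega
        rw [mem_cells, YoungDiagram.mem_iff_lt_rowLen] at hm
        have hpos' : 0 < μ.rowLen (c.1 - 1) := by omega
        have := rowLen_pos_iff.mp hpos'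
        exact ⟨by omega, Or.inr (by omega)⟩
    rw [up, mem_image]
    refine ⟨⟨c.1, haddrow⟩, mem_attach _ _, ?_⟩
    have hcc : (c.1, μ.rowLen c.1) = c := by
      refine Prod.ext rfl ?_
      simp only
      omega
    ext x
    show x ∈ insert (c.1, μ.rowLen c.1) μ.cells ↔ x ∈ ν.cells
    rw [hcc, hcells]

lemma mem_down {μ ν : YoungDiagram} :
    ν ∈ down μ ↔ ν ≤ μ ∧ ν.cells.card + 1 = μ.cells.card := by
  constructor
  · rintro hν
    rw [down, mem_image] at hν
    obtain ⟨⟨i, hi⟩, _, rfl⟩ := hν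
    constructor
    · intro x hx
      exact mem_of_mem_erase hx
    · show (μ.cells.erase (i, μ.rowLen i - 1)).card + 1 = μ.cells.card
      rw [card_erase_of_mem (rowLen_mem hi)]
      have : 0 < μ.cells.card := card_pos.mpr ⟨_, rowLen_mem hi⟩
      omega
  · rintro ⟨hle, hcard⟩
    have hsub : ν.cells ⊆ μ.cells := hle
    have hd : (μ.cells \ ν.cells).card = 1 := by
      rw [card_sdiff_of_subset hsub]; omega
    obtain ⟨c, hc⟩ := card_eq_one.mp hd
    have hcmem : c ∈ μ.cells ∧ c ∉ ν.cells := by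
      have h' : c ∈ μ.cells \ ν.cells := by rw [hc]; exact mem_singleton_self c
      exact ⟨(mem_sdiff.mp h').1, (mem_sdiff.mp h').2⟩
    have hcells : μ.cells = insert c ν.cells := by
      have h1 : ν.cells ∪ μ.cells \ ν.cells = μ.cells := union_sdiff_of_subset hsub
      rw [hc] at h1
      rw [← h1, union_comm, insert_eq]
    have hnotup : ∀ x : ℕ × ℕ, c ≤ x → c ≠ x → x ∉ μ.cells := by
      intro x hx hne hmem
      have hx' : x ∈ μ.cells := hmem
      rw [hcells, mem_insert] at hx'
      rcases hx' with h' | h'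
      · exact hne h'.symm
      · have : c ∈ ν := ν.isLowerSet hx h'
        exact hcmem.2 this
    have hc2 : c.2 + 1 = μ.rowLen c.1 := by
      have h1 : (c.1, c.2 + 1) ∉ μ.cells := by
        apply hnotup
        · exact Prod.le_def.mpr ⟨le_refl _, by simp⟩
        · intro h
          have := congrArg Prod.snd h
          simp only at this
          omega
      rw [mem_cells, YoungDiagram.mem_iff_lt_rowLen] at h1
      have h2 := hcmem.1
      rw [mem_cells, YoungDiagram.mem_iff_lt_rowLen] at h2
      omega
    have hremrow : c.1 ∈ remRows μ := by
      simp only [remRows, mem_filter, mem_range]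
      have h1 : (c.1 + 1, c.2) ∉ μ.cells := by
        apply hnotup
        · exact Prod.le_def.mpr ⟨by simp, le_refl _⟩
        · intro h
          have := congrArg Prod.fst h
          simp only at this
          omega
      rw [mem_cells, YoungDiagram.mem_iff_lt_rowLen] at h1
      have h3 : (c.1, 0) ∈ μ := μ.up_left_mem (le_refl _) (Nat.zero_le _) hcmem.1
      rw [YoungDiagram.mem_iff_lt_colLen] at h3
      exact ⟨h3, by omega⟩
    rw [down, mem_image]
    refine ⟨⟨c.1, hremrow⟩, mem_attach _ _, ?_⟩
    have hcc : c = (c.1, μ.rowLen c.1 - 1) := by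
      refine Prod.ext rfl ?_
      simp only
      omega
    ext x
    show x ∈ μ.cells.erase (c.1, μ.rowLen c.1 - 1) ↔ x ∈ ν.cells
    rw [← hcc, hcells, Finset.erase_insert hcmem.2]

lemma down_iff_up {μ ν : YoungDiagram} : ν ∈ down μ ↔ μ ∈ up ν := by
  rw [mem_down, mem_up]
  tauto

lemma card_up (μ : YoungDiagram) : (up μ).card = (addRows μ).card := by
  have hinj : Set.InjOn (fun i : {x // x ∈ addRows μ} => addCell μ i.1 i.2)
      ↑(addRows μ).attach := by
    intro i _ i' _ h
    have hcells : insert ((i : ℕ), μ.rowLen i) μ.cells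
        = insert ((i' : ℕ), μ.rowLen i') μ.cells := congrArg YoungDiagram.cells h
    have hmem : ((i : ℕ), μ.rowLen i) ∈ insert ((i' : ℕ), μ.rowLen i') μ.cells := by
      rw [← hcells]; exact mem_insert_self _ _
    rw [mem_insert] at hmem
    rcases hmem with h' | h'
    · exact Subtype.ext (congrArg Prod.fst h')
    · exact absurd h' (not_mem_self_add μ _)
  rw [up, card_image_of_injOn hinj, card_attach]

lemma card_down (μ : YoungDiagram) : (down μ).card = (remRows μ).card := by
  have hinj : Set.InjOn (fun i : {x // x ∈ remRows μ} => remCell μ i.1 i.2)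
      ↑(remRows μ).attach := by
    intro i _ i' _ h
    have hcells : μ.cells.erase ((i : ℕ), μ.rowLen i - 1)
        = μ.cells.erase ((i' : ℕ), μ.rowLen i' - 1) := congrArg YoungDiagram.cells h
    have h1 : ((i : ℕ), μ.rowLen i - 1) ∉ μ.cells.erase ((i' : ℕ), μ.rowLen i' - 1) := by
      rw [← hcells]; exact notMem_erase _ _
    rw [mem_erase] at h1
    push_neg at h1
    apply Subtype.ext
    by_contra hne
    exact absurd (rowLen_mem i.2) (h1 (fun heq => hne (congrArg Prod.fst heq)))
  rw [down, card_image_of_injOn hinj, card_attach]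

lemma card_up_down (μ : YoungDiagram) : (up μ).card = (down μ).card + 1 := by
  rw [card_up, card_down, card_addRows]


lemma card_inter_up_down {ν ρ : YoungDiagram} (hne : ν ≠ ρ)
    (hcard : ν.cells.card = ρ.cells.card) :
    (up ν ∩ up ρ).card = (down ν ∩ down ρ).card := by
  set m := ν.cells.card with hm
  have hUI : (ν ⊔ ρ).cells.card + (ν ⊓ ρ).cells.card = m + m := by
    rw [cells_sup, cells_inf, card_union_add_card_inter]
    omega
  have hUgt : m < (ν ⊔ ρ).cells.card := by
    rcases Nat.lt_or_ge m (ν ⊔ ρ).cells.card with h | h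
    · exact h
    · exfalso
      have hsub : ν.cells ⊆ (ν ⊔ ρ).cells := by rw [cells_sup]; exact subset_union_left
      have h1 : ν.cells = (ν ⊔ ρ).cells := eq_of_subset_of_card_le hsub (by omega)
      have h2 : ρ.cells ⊆ ν.cells := by rw [h1, cells_sup]; exact subset_union_right
      have h3 : ρ.cells = ν.cells := eq_of_subset_of_card_le h2 (by omega)
      exact hne (by ext x; rw [h3])
  rcases Nat.lt_or_ge (m + 1) (ν ⊔ ρ).cells.card with hbig | hsmall
  · -- both intersections empty
    have h1 : up ν ∩ up ρ = ∅ := by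
      rw [eq_empty_iff_forall_notMem]
      intro μ hμ
      rw [mem_inter, mem_up, mem_up] at hμ
      have hsub : (ν ⊔ ρ).cells ⊆ μ.cells := by
        rw [cells_sup]
        exact union_subset hμ.1.1 hμ.2.1
      have := card_le_card hsub
      omega
    have h2 : down ν ∩ down ρ = ∅ := by
      rw [eq_empty_iff_forall_notMem]
      intro σ hσ
      rw [mem_inter, mem_down, mem_down] at hσ
      have hsub : σ.cells ⊆ (ν ⊓ ρ).cells := by
        rw [cells_inf]
        exact subset_inter hσ.1.1 hσ.2.1
      have := card_le_card hsub
      omega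
    rw [h1, h2]
  · have hU : (ν ⊔ ρ).cells.card = m + 1 := by omega
    have hI : (ν ⊓ ρ).cells.card + 1 = m := by omega
    have h1 : up ν ∩ up ρ = {ν ⊔ ρ} := by
      ext μ
      rw [mem_inter, mem_up, mem_up, mem_singleton]
      constructor
      · rintro ⟨⟨hν1, hν2⟩, ⟨hρ1, hρ2⟩⟩
        have hsub : (ν ⊔ ρ).cells ⊆ μ.cells := by
          rw [cells_sup]; exact union_subset hν1 hρ1
        have h5 : (ν ⊔ ρ).cells = μ.cells := eq_of_subset_of_card_le hsub (by omega)
        ext x; rw [h5]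
      · rintro rfl
        exact ⟨⟨le_sup_left, by omega⟩, ⟨le_sup_right, by omega⟩⟩
    have h2 : down ν ∩ down ρ = {ν ⊓ ρ} := by
      ext σ
      rw [mem_inter, mem_down, mem_down, mem_singleton]
      constructor
      · rintro ⟨⟨hν1, hν2⟩, ⟨hρ1, hρ2⟩⟩
        have hsub : σ.cells ⊆ (ν ⊓ ρ).cells := by
          rw [cells_inf]; exact subset_inter hν1 hρ1
        have h5 : σ.cells = (ν ⊓ ρ).cells := eq_of_subset_of_card_le hsub (by omega)
        ext x; rw [h5]
      · rintro rfl
        exact ⟨⟨inf_le_left, by omega⟩, ⟨inf_le_right, by omega⟩⟩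
    rw [h1, h2]
    simp

/-- The number of maximal chains from `⊥` to `μ` in Young's lattice
(= number of standard Young tableaux of shape `μ`). -/
def f (μ : YoungDiagram) : ℕ :=
  if μ.cells.card = 0 then 1
  else ∑ ν ∈ (down μ).attach, f ν.1
termination_by μ.cells.card
decreasing_by
  have h := (mem_down.mp ν.2).2
  omega

lemma f_of_card_zero {μ : YoungDiagram} (h : μ.cells.card = 0) : f μ = 1 := by
  rw [f, if_pos h]

lemma f_eq_sum {μ : YoungDiagram} (h : μ.cells.card ≠ 0) : f μ = ∑ ν ∈ down μ, f ν := by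
  rw [f, if_neg h]
  exact Finset.sum_attach _ _

lemma down_eq_empty {μ : YoungDiagram} (h : μ.cells.card = 0) : down μ = ∅ := by
  rw [eq_empty_iff_forall_notMem]
  intro ν hν
  have := (mem_down.mp hν).2
  omega

lemma sum_swap' {M : Type*} [AddCommMonoid M] (s : Finset YoungDiagram)
    (t : YoungDiagram → Finset YoungDiagram) (g : YoungDiagram → YoungDiagram → M) :
    ∑ μ ∈ s, ∑ ρ ∈ t μ, g μ ρ
      = ∑ ρ ∈ s.biUnion t, ∑ μ ∈ s.filter (fun μ => ρ ∈ t μ), g μ ρ := by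
  have h1 : ∀ μ ∈ s, ∑ ρ ∈ t μ, g μ ρ
      = ∑ ρ ∈ s.biUnion t, if ρ ∈ t μ then g μ ρ else 0 := by
    intro μ hμ
    rw [← Finset.sum_filter]
    congr 1
    ext ρ
    simp only [mem_filter, mem_biUnion]
    exact ⟨fun h => ⟨⟨μ, hμ, h⟩, h⟩, fun h => h.2⟩
  rw [Finset.sum_congr rfl h1, Finset.sum_comm]
  exact Finset.sum_congr rfl fun ρ _ => (Finset.sum_filter _ _).symm

lemma filter_up_eq (ν ρ : YoungDiagram) :
    (up ν).filter (fun μ => ρ ∈ down μ) = up ν ∩ up ρ := by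
  ext μ
  simp only [mem_filter, mem_inter]
  rw [down_iff_up]

lemma filter_down_eq (ν ρ : YoungDiagram) :
    (down ν).filter (fun σ => ρ ∈ up σ) = down ν ∩ down ρ := by
  ext σ
  simp only [mem_filter, mem_inter]
  rw [← down_iff_up]

lemma up_nonempty (ν : YoungDiagram) : (up ν).Nonempty := by
  refine ⟨addCell ν 0 (zero_mem_addRows ν), ?_⟩
  rw [up, mem_image]
  exact ⟨⟨0, zero_mem_addRows ν⟩, mem_attach _ _, rfl⟩

lemma sum_up_eq : ∀ (n : ℕ) (ν : YoungDiagram), ν.cells.card = n →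
    ∑ μ ∈ up ν, f μ = (ν.cells.card + 1) * f ν := by
  intro n
  induction n using Nat.strong_induction_on with
  | _ n IH =>
    intro ν hν
    -- the two "big" index sets
    set R1 := (up ν).biUnion down with hR1
    set R2 := (down ν).biUnion up with hR2
    set R := R1 ∪ R2 with hR
    have hcardR : ∀ ρ ∈ R, ρ.cells.card = ν.cells.card := by
      intro ρ hρ
      rw [hR, mem_union] at hρ
      rcases hρ with hρ | hρ
      · rw [hR1, mem_biUnion] at hρ
        obtain ⟨μ, hμ, hρ⟩ := hρ
        have h1 := (mem_up.mp hμ).2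
        have h2 := (mem_down.mp hρ).2
        omega
      · rw [hR2, mem_biUnion] at hρ
        obtain ⟨σ, hσ, hρ⟩ := hρ
        have h1 := (mem_down.mp hσ).2
        have h2 := (mem_up.mp hρ).2
        omega
    have hνR : ν ∈ R := by
      obtain ⟨μ₀, hμ₀⟩ := up_nonempty ν
      rw [hR, mem_union, hR1, mem_biUnion]
      exact Or.inl ⟨μ₀, hμ₀, down_iff_up.mpr hμ₀⟩
    -- E1
    have hE1 : ∑ μ ∈ up ν, f μ = ∑ ρ ∈ R, (up ν ∩ up ρ).card * f ρ := by
      have h0 : ∀ μ ∈ up ν, f μ = ∑ ρ ∈ down μ, f ρ := by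
        intro μ hμ
        have := (mem_up.mp hμ).2
        exact f_eq_sum (by omega)
      rw [Finset.sum_congr rfl h0, sum_swap']
      rw [← hR1]
      rw [Finset.sum_subset (subset_union_left : R1 ⊆ R)]
      · apply Finset.sum_congr rfl
        intro ρ _
        rw [filter_up_eq, Finset.sum_const, smul_eq_mul]
      · intro ρ _ hρ
        rw [filter_up_eq]
        have hempty : up ν ∩ up ρ = ∅ := by
          rw [eq_empty_iff_forall_notMem]
          intro μ hμ
          rw [mem_inter] at hμ
          apply hρ
          rw [hR1, mem_biUnion]
          exact ⟨μ, hμ.1, down_iff_up.mpr hμ.2⟩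
        rw [hempty]
        simp
    -- E2
    have hE2 : ∑ σ ∈ down ν, ∑ μ ∈ up σ, f μ
        = ∑ ρ ∈ R, (down ν ∩ down ρ).card * f ρ := by
      rw [sum_swap', ← hR2]
      rw [Finset.sum_subset (subset_union_right : R2 ⊆ R)]
      · apply Finset.sum_congr rfl
        intro ρ _
        rw [filter_down_eq, Finset.sum_const, smul_eq_mul]
      · intro ρ _ hρ
        rw [filter_down_eq]
        have hempty : down ν ∩ down ρ = ∅ := by
          rw [eq_empty_iff_forall_notMem]
          intro σ hσ
          rw [mem_inter] at hσ
          apply hρ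
          rw [hR2, mem_biUnion]
          exact ⟨σ, hσ.1, down_iff_up.mp hσ.2⟩
        rw [hempty]
        simp
    -- IH on down ν
    have hIH : ∑ σ ∈ down ν, ∑ μ ∈ up σ, f μ = ν.cells.card * f ν := by
      rcases Nat.eq_zero_or_pos ν.cells.card with h0 | hpos
      · rw [down_eq_empty h0, Finset.sum_empty, h0, Nat.zero_mul]
      · have h1 : ∀ σ ∈ down ν, ∑ μ ∈ up σ, f μ = ν.cells.card * f σ := by
          intro σ hσ
          have hc := (mem_down.mp hσ).2
          have h3 := IH σ.cells.card (by omega) σ rfl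
          rw [h3, hc]
        rw [Finset.sum_congr rfl h1, ← Finset.mul_sum, ← f_eq_sum (by omega)]
    -- split off the diagonal term ρ = ν
    have hsplit1 : ∑ ρ ∈ R, (up ν ∩ up ρ).card * f ρ
        = (up ν).card * f ν + ∑ ρ ∈ R.erase ν, (up ν ∩ up ρ).card * f ρ := by
      rw [← Finset.add_sum_erase _ _ hνR, inter_self]
    have hsplit2 : ∑ ρ ∈ R, (down ν ∩ down ρ).card * f ρ
        = (down ν).card * f ν + ∑ ρ ∈ R.erase ν, (down ν ∩ down ρ).card * f ρ := by
      rw [← Finset.add_sum_erase _ _ hνR, inter_self]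
    have hoff : ∑ ρ ∈ R.erase ν, (up ν ∩ up ρ).card * f ρ
        = ∑ ρ ∈ R.erase ν, (down ν ∩ down ρ).card * f ρ := by
      apply Finset.sum_congr rfl
      intro ρ hρ
      rw [mem_erase] at hρ
      rw [card_inter_up_down (Ne.symm hρ.1) (hcardR ρ hρ.2).symm]
    have hud := card_up_down ν
    -- assemble
    have e1 : ∑ μ ∈ up ν, f μ
        = (up ν).card * f ν + ∑ ρ ∈ R.erase ν, (down ν ∩ down ρ).card * f ρ := by
      rw [hE1, hsplit1, hoff]
    have e2 : ν.cells.card * f ν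
        = (down ν).card * f ν + ∑ ρ ∈ R.erase ν, (down ν ∩ down ρ).card * f ρ := by
      rw [← hIH, hE2, hsplit2]
    rw [e1, hud]
    simp only [Nat.add_mul, Nat.one_mul]
    omega

lemma sum_sq_le_factorial : ∀ (m : ℕ) (B : Finset YoungDiagram),
    (∀ μ ∈ B, μ.cells.card = m) → ∑ μ ∈ B, f μ ^ 2 ≤ m.factorial := by
  intro m
  induction m with
  | zero =>
    intro B hB
    have hcard : B.card ≤ 1 := by
      rw [Finset.card_le_one]
      intro a ha b hb
      have ha' : a.cells = ∅ := card_eq_zero.mp (hB a ha)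
      have hb' : b.cells = ∅ := card_eq_zero.mp (hB b hb)
      ext x
      rw [ha', hb']
    have h1 : ∀ μ ∈ B, f μ ^ 2 = 1 := by
      intro μ hμ
      rw [f_of_card_zero (hB μ hμ), one_pow]
    rw [Finset.sum_congr rfl h1, Finset.sum_const, smul_eq_mul, mul_one]
    simpa using hcard
  | succ m IH =>
    intro B hB
    have step1 : ∀ μ ∈ B, f μ ^ 2 = ∑ ν ∈ down μ, f μ * f ν := by
      intro μ hμ
      rw [pow_two, ← Finset.mul_sum]
      congr 1
      exact f_eq_sum (by rw [hB μ hμ]; omega)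
    set B' := B.biUnion down with hB'
    have hB'card : ∀ ν ∈ B', ν.cells.card = m := by
      intro ν hν
      rw [hB', mem_biUnion] at hν
      obtain ⟨μ, hμ, hν⟩ := hν
      have h1 := (mem_down.mp hν).2
      have h2 := hB μ hμ
      omega
    calc ∑ μ ∈ B, f μ ^ 2 = ∑ μ ∈ B, ∑ ν ∈ down μ, f μ * f ν :=
          Finset.sum_congr rfl step1
      _ = ∑ ν ∈ B', ∑ μ ∈ B.filter (fun μ => ν ∈ down μ), f μ * f ν := sum_swap' _ _ _
      _ ≤ ∑ ν ∈ B', ∑ μ ∈ up ν, f μ * f ν := by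
          apply Finset.sum_le_sum
          intro ν _
          apply Finset.sum_le_sum_of_subset
          intro μ hμ
          rw [mem_filter] at hμ
          exact down_iff_up.mp hμ.2
      _ = ∑ ν ∈ B', (m + 1) * f ν ^ 2 := by
          apply Finset.sum_congr rfl
          intro ν hν
          rw [← Finset.sum_mul, sum_up_eq ν.cells.card ν rfl, hB'card ν hν, pow_two,
            Nat.mul_assoc]
      _ = (m + 1) * ∑ ν ∈ B', f ν ^ 2 := by rw [Finset.mul_sum]
      _ ≤ (m + 1) * m.factorial := Nat.mul_le_mul_left _ (IH B' hB'card)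
      _ = (m + 1).factorial := (Nat.factorial_succ m).symm

end SYTAux

namespace SYTAux
open YoungDiagram Finset

/-- The type of standard Young tableaux of shape `μ`. -/
def SYT (μ : YoungDiagram) := {T : ↥μ.cells ≃ Fin μ.cells.card //
    ∀ c₁ c₂ : ↥μ.cells, (c₁ : ℕ × ℕ).1 ≤ (c₂ : ℕ × ℕ).1 → (c₁ : ℕ × ℕ).2 ≤ (c₂ : ℕ × ℕ).2 →
      c₁ ≠ c₂ → T c₁ < T c₂}

lemma numSYT_eq (μ : YoungDiagram) : numSYT μ = Nat.card (SYT μ) := rfl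

instance (μ : YoungDiagram) : Finite (SYT μ) := by unfold SYT; infer_instance

section EraseTop

variable {μ : YoungDiagram}

/-- The cell containing the largest entry. -/
def topCell (hpos : 0 < μ.cells.card) (T : SYT μ) : ↥μ.cells :=
  T.1.symm ⟨μ.cells.card - 1, by omega⟩

lemma topCell_apply (hpos : 0 < μ.cells.card) (T : SYT μ) :
    T.1 (topCell hpos T) = ⟨μ.cells.card - 1, by omega⟩ :=
  T.1.apply_symm_apply _

lemma val_lt_of_ne_topCell (hpos : 0 < μ.cells.card) (T : SYT μ) {x : ↥μ.cells}
    (hx : x ≠ topCell hpos T) : ((T.1 x : Fin μ.cells.card) : ℕ) < μ.cells.card - 1 := by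
  have h1 : T.1 x ≠ ⟨μ.cells.card - 1, by omega⟩ := by
    intro h
    apply hx
    have := congrArg T.1.symm h
    rwa [T.1.symm_apply_apply] at this
  have h2 : ((T.1 x : Fin μ.cells.card) : ℕ) < μ.cells.card := (T.1 x).2
  have h3 : ((T.1 x : Fin μ.cells.card) : ℕ) ≠ μ.cells.card - 1 := by
    intro h
    exact h1 (Fin.ext h)
  omega

/-- The diagram obtained by removing the cell with the largest entry. -/
def eraseDiag (hpos : 0 < μ.cells.card) (T : SYT μ) : YoungDiagram :=
  ⟨μ.cells.erase ↑(topCell hpos T), by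
    intro y x hxy hy
    simp only [coe_erase, Set.mem_diff, mem_coe, Set.mem_singleton_iff] at hy ⊢
    refine ⟨Finset.mem_coe.mp (μ.isLowerSet hxy (Finset.mem_coe.mpr hy.1)), ?_⟩
    intro hx
    -- x is the top cell, but x ≤ y with y ≠ x : contradiction with maximality
    have hym : y ∈ μ.cells := hy.1
    have hxm : x ∈ μ.cells := Finset.mem_coe.mp (μ.isLowerSet hxy (Finset.mem_coe.mpr hy.1))
    have hne : (⟨x, hxm⟩ : ↥μ.cells) ≠ ⟨y, hym⟩ := by
      intro h
      have := congrArg Subtype.val h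
      simp only at this
      exact hy.2 (by rw [← this, hx])
    have hlt := T.2 ⟨x, hxm⟩ ⟨y, hym⟩ (Prod.le_def.mp hxy).1 (Prod.le_def.mp hxy).2 hne
    have hxtop : (⟨x, hxm⟩ : ↥μ.cells) = topCell hpos T := Subtype.ext hx
    rw [hxtop, topCell_apply hpos T] at hlt
    have := (T.1 ⟨y, hym⟩).2
    have hlt' : μ.cells.card - 1 < ((T.1 ⟨y, hym⟩ : Fin μ.cells.card) : ℕ) := hlt
    omega⟩

lemma eraseDiag_mem_down (hpos : 0 < μ.cells.card) (T : SYT μ) :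
    eraseDiag hpos T ∈ down μ := by
  rw [mem_down]
  constructor
  · intro x hx
    exact mem_of_mem_erase hx
  · show (μ.cells.erase ↑(topCell hpos T)).card + 1 = μ.cells.card
    rw [card_erase_of_mem (topCell hpos T).2]
    omega

lemma eraseDiag_card (hpos : 0 < μ.cells.card) (T : SYT μ) :
    (eraseDiag hpos T).cells.card = μ.cells.card - 1 := by
  show (μ.cells.erase ↑(topCell hpos T)).card = μ.cells.card - 1
  rw [card_erase_of_mem (topCell hpos T).2]

lemma mem_eraseDiag_iff (hpos : 0 < μ.cells.card) (T : SYT μ) {x : ℕ × ℕ} :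
    x ∈ (eraseDiag hpos T).cells ↔ x ≠ ↑(topCell hpos T) ∧ x ∈ μ.cells :=
  Finset.mem_erase

/-- Restriction of `T` to the erased diagram. -/
noncomputable def resSYT (hpos : 0 < μ.cells.card) (T : SYT μ) : SYT (eraseDiag hpos T) := by
  refine ⟨Equiv.ofBijective
    (fun x => ⟨((T.1 ⟨↑x, mem_of_mem_erase x.2⟩ : Fin μ.cells.card) : ℕ), ?_⟩) ⟨?_, ?_⟩, ?_⟩
  · -- value bound
    rw [eraseDiag_card]
    apply val_lt_of_ne_topCell hpos T
    intro h
    have := congrArg Subtype.val h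
    simp only at this
    exact ((mem_eraseDiag_iff hpos T).mp x.2).1 this
  · -- injective
    intro x y h
    simp only [Fin.mk.injEq] at h
    have h1 : T.1 ⟨↑x, mem_of_mem_erase x.2⟩ = T.1 ⟨↑y, mem_of_mem_erase y.2⟩ := Fin.ext h
    have h2 := T.1.injective h1
    simp only [Subtype.mk.injEq] at h2
    exact Subtype.ext h2
  · -- surjective
    intro q
    have hq : (q : ℕ) < μ.cells.card - 1 := by
      have h1 := q.2
      have h2 := eraseDiag_card hpos T
      omega
    set x := T.1.symm ⟨(q : ℕ), by omega⟩ with hx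
    have hxne : (x : ℕ × ℕ) ≠ ↑(topCell hpos T) := by
      intro h
      have hxx : x = topCell hpos T := Subtype.ext h
      rw [hx] at hxx
      have := congrArg T.1 hxx
      rw [T.1.apply_symm_apply, topCell_apply] at this
      have := congrArg Fin.val this
      simp only at this
      omega
    refine ⟨⟨↑x, (mem_eraseDiag_iff hpos T).mpr ⟨hxne, x.2⟩⟩, ?_⟩
    apply Fin.ext
    show ((T.1 ⟨↑x, _⟩ : Fin μ.cells.card) : ℕ) = (q : ℕ)
    have hxx : (⟨↑x, mem_of_mem_erase ((mem_eraseDiag_iff hpos T).mpr ⟨hxne, x.2⟩ : (x : ℕ × ℕ) ∈ (eraseDiag hpos T).cells)⟩ : ↥μ.cells) = x :=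
      Subtype.ext rfl
    rw [hxx, hx, T.1.apply_symm_apply]
  · -- monotonicity
    intro c₁ c₂ h1 h2 hne
    have hne' : (⟨↑c₁, mem_of_mem_erase c₁.2⟩ : ↥μ.cells) ≠ ⟨↑c₂, mem_of_mem_erase c₂.2⟩ := by
      intro h
      simp only [Subtype.mk.injEq] at h
      exact hne (Subtype.ext h)
    have hlt := T.2 ⟨↑c₁, mem_of_mem_erase c₁.2⟩ ⟨↑c₂, mem_of_mem_erase c₂.2⟩ h1 h2 hne'
    rw [Fin.lt_def]
    exact hlt

/-- Untyped evaluation of a (diagram, tableau) pair at a cell of `μ`. -/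
def evalAux (μ : YoungDiagram) (p : Σ ν : ↥(down μ), SYT (↑ν : YoungDiagram))
    (x : ↥μ.cells) : ℕ :=
  if hx : (↑x : ℕ × ℕ) ∈ (↑p.1 : YoungDiagram).cells
  then ((p.2.1 ⟨↑x, hx⟩ : Fin (↑p.1 : YoungDiagram).cells.card) : ℕ)
  else μ.cells.card

lemma evalAux_ne (hpos : 0 < μ.cells.card) (T : SYT μ) {x : ↥μ.cells}
    (hx : x ≠ topCell hpos T) :
    evalAux μ ⟨⟨eraseDiag hpos T, eraseDiag_mem_down hpos T⟩, resSYT hpos T⟩ x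
      = ((T.1 x : Fin μ.cells.card) : ℕ) := by
  have hmem : (↑x : ℕ × ℕ) ∈ (eraseDiag hpos T).cells :=
    (mem_eraseDiag_iff hpos T).mpr ⟨fun hc => hx (Subtype.ext hc), x.2⟩
  unfold evalAux
  rw [dif_pos hmem]
  have hxx : (⟨↑x, mem_of_mem_erase hmem⟩ : ↥μ.cells) = x := Subtype.ext rfl
  show ((T.1 ⟨↑x, mem_of_mem_erase hmem⟩ : Fin μ.cells.card) : ℕ) = _
  rw [hxx]

lemma evalAux_top (hpos : 0 < μ.cells.card) (T : SYT μ) :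
    evalAux μ ⟨⟨eraseDiag hpos T, eraseDiag_mem_down hpos T⟩, resSYT hpos T⟩
      (topCell hpos T) = μ.cells.card := by
  unfold evalAux
  rw [dif_neg]
  intro hc
  exact ((mem_eraseDiag_iff hpos T).mp hc).1 rfl

end EraseTop

lemma numSYT_le_f : ∀ (n : ℕ) (μ : YoungDiagram), μ.cells.card = n → numSYT μ ≤ f μ := by
  intro n
  induction n using Nat.strong_induction_on with
  | _ n IH =>
    intro μ hn
    rcases Nat.eq_zero_or_pos μ.cells.card with h0 | hpos
    · rw [f_of_card_zero h0, numSYT_eq]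
      haveI : Subsingleton (SYT μ) := by
        constructor
        intro a b
        apply Subtype.ext
        apply Equiv.ext
        intro x
        exact absurd (card_pos.mpr ⟨↑x, x.2⟩ : 0 < μ.cells.card) (by omega)
      have hle : Nat.card (SYT μ) ≤ Nat.card (Fin 1) :=
        Nat.card_le_card_of_injective (fun _ => (0 : Fin 1))
          (fun a b _ => Subsingleton.elim a b)
      simpa using hle
    · -- injection into Σ ν ∈ down μ, SYT ν
      classical
      have hinj : Function.Injective
          (fun T : SYT μ =>
            (⟨⟨eraseDiag hpos T, eraseDiag_mem_down hpos T⟩, resSYT hpos T⟩ :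
              Σ ν : ↥(down μ), SYT ↑ν)) := by
        intro T T' h
        have hE := congrArg (evalAux μ) h
        simp only at hE
        have hEx : ∀ x : ↥μ.cells,
            evalAux μ ⟨⟨eraseDiag hpos T, eraseDiag_mem_down hpos T⟩, resSYT hpos T⟩ x
            = evalAux μ ⟨⟨eraseDiag hpos T', eraseDiag_mem_down hpos T'⟩, resSYT hpos T'⟩ x :=
          fun x => congrFun hE x
        have htop : topCell hpos T = topCell hpos T' := by
          by_contra hne
          have h1 := hEx (topCell hpos T)
          rw [evalAux_top hpos T, evalAux_ne hpos T' hne] at h1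
          have h2 := (T'.1 (topCell hpos T)).2
          omega
        apply Subtype.ext
        apply Equiv.ext
        intro x
        apply Fin.ext
        by_cases hx : x = topCell hpos T
        · rw [hx, topCell_apply hpos T, htop, topCell_apply hpos T']
        · have h1 := hEx x
          rw [evalAux_ne hpos T hx, evalAux_ne hpos T' (htop ▸ hx)] at h1
          exact h1
      have hle := Nat.card_le_card_of_injective _ hinj
      rw [numSYT_eq]
      refine le_trans hle ?_
      -- card of the sigma type
      haveI : ∀ ν : ↥(down μ), Fintype (SYT (↑ν : YoungDiagram)) := fun ν => Fintype.ofFinite _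
      have hsig : Nat.card (Σ ν : ↥(down μ), SYT (↑ν : YoungDiagram))
          = ∑ ν ∈ (down μ).attach, Nat.card (SYT (↑ν : YoungDiagram)) := by
        rw [Nat.card_eq_fintype_card, Fintype.card_sigma, ← Finset.univ_eq_attach]
        exact Finset.sum_congr rfl fun ν _ => (Nat.card_eq_fintype_card (α := SYT ↑ν)).symm
      rw [hsig]
      have hstep : ∀ ν ∈ (down μ).attach, Nat.card (SYT (↑ν : YoungDiagram)) ≤ f ↑ν := by
        intro ν _
        have hc := (mem_down.mp ν.2).2
        rw [← numSYT_eq]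
        exact IH (↑ν : YoungDiagram).cells.card (by omega) _ rfl
      refine le_trans (Finset.sum_le_sum hstep) ?_
      rw [Finset.sum_attach (down μ) f, ← f_eq_sum (by omega)]

end SYTAux

namespace SYTAux
open YoungDiagram Finset

/-- The diagram consisting of rows `1, 2, …` of `μ`, shifted up by one row. -/
def body (μ : YoungDiagram) : YoungDiagram where
  cells := (μ.cells.filter fun c => c.1 ≠ 0).image fun c => (c.1 - 1, c.2)
  isLowerSet := by
    intro y x hxy hy
    simp only [coe_image, coe_filter, Set.mem_image, Set.mem_setOf_eq, mem_coe] at hy ⊢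
    obtain ⟨c, ⟨hc, hc0⟩, hcy⟩ := hy
    have hcy1 : c = (y.1 + 1, y.2) := by
      obtain ⟨hf, hs⟩ := Prod.ext_iff.mp hcy
      simp only at hf hs
      refine Prod.ext (by omega) (by omega)
    refine ⟨(x.1 + 1, x.2), ⟨?_, by simp⟩, by simp⟩
    have hle : ((x.1 + 1 : ℕ), x.2) ≤ ((y.1 + 1 : ℕ), y.2) :=
      Prod.le_def.mpr ⟨by have := (Prod.le_def.mp hxy).1; simp; omega,
        by have := (Prod.le_def.mp hxy).2; simpa using this⟩
    rw [hcy1] at hc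
    exact Finset.mem_coe.mp (μ.isLowerSet hle (Finset.mem_coe.mpr hc))

lemma mem_body {μ : YoungDiagram} {c : ℕ × ℕ} :
    c ∈ (body μ).cells ↔ (c.1 + 1, c.2) ∈ μ.cells := by
  show c ∈ (μ.cells.filter fun c => c.1 ≠ 0).image (fun c => (c.1 - 1, c.2)) ↔ _
  rw [mem_image]
  constructor
  · rintro ⟨a, ha, rfl⟩
    rw [mem_filter] at ha
    have h1 : (a.1 - 1 + 1, a.2) = a := by
      refine Prod.ext ?_ rfl
      simp only
      omega
    rw [h1]
    exact ha.1
  · intro h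
    refine ⟨(c.1 + 1, c.2), mem_filter.mpr ⟨h, by simp⟩, by simp⟩

lemma card_body (μ : YoungDiagram) :
    (body μ).cells.card + μ.rowLen 0 = μ.cells.card := by
  have h1 : (body μ).cells.card = (μ.cells.filter fun c => c.1 ≠ 0).card := by
    show ((μ.cells.filter fun c => c.1 ≠ 0).image fun c => (c.1 - 1, c.2)).card = _
    apply card_image_of_injOn
    intro a ha b hb hab
    rw [mem_coe, mem_filter] at ha hb
    obtain ⟨hf, hs⟩ := Prod.ext_iff.mp hab
    simp only at hf hs
    have ha0 := ha.2
    have hb0 := hb.2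
    refine Prod.ext (by omega) (by omega)
  have h2 : (μ.cells.filter fun c => ¬(c.1 ≠ 0)).card = μ.rowLen 0 := by
    have hrow : μ.cells.filter (fun c => ¬(c.1 ≠ 0)) = μ.row 0 := by
      ext c
      simp only [mem_filter, YoungDiagram.mem_row_iff, Decidable.not_not, mem_cells]
    rw [hrow, YoungDiagram.rowLen_eq_card]
  have h3 := Finset.card_filter_add_card_filter_not
    (s := μ.cells) (p := fun c => c.1 ≠ 0)
  omega

section RowSplit

variable {μ : YoungDiagram}

/-- Shift a cell of the body down into `μ`. -/
def sh (x : ↥(body μ).cells) : ↥μ.cells :=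
  ⟨((x : ℕ × ℕ).1 + 1, (x : ℕ × ℕ).2), mem_body.mp x.2⟩

lemma sh_injective : Function.Injective (sh (μ := μ)) := by
  intro x y h
  have h1 : ((x : ℕ × ℕ).1 + 1, (x : ℕ × ℕ).2) = ((y : ℕ × ℕ).1 + 1, (y : ℕ × ℕ).2) :=
    congrArg Subtype.val h
  obtain ⟨hf, hs⟩ := Prod.ext_iff.mp h1
  simp only at hf hs
  apply Subtype.ext
  refine Prod.ext (by omega) (by omega)

/-- The set of values used below the first row. -/
noncomputable def valSet (T : SYT μ) : Finset (Fin μ.cells.card) :=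
  Finset.univ.image fun x : ↥(body μ).cells => T.1 (sh x)

lemma card_valSet (T : SYT μ) : (valSet T).card = (body μ).cells.card := by
  unfold valSet
  rw [Finset.card_image_of_injective _
      (fun a b h => sh_injective (T.1.injective h) : Function.Injective fun x => T.1 (sh x)),
    Finset.card_univ, Fintype.card_coe]

lemma mem_valSet (T : SYT μ) (x : ↥(body μ).cells) : T.1 (sh x) ∈ valSet T := by
  unfold valSet
  rw [Finset.mem_image]
  exact ⟨x, Finset.mem_univ _, rfl⟩

/-- The restriction of `T` to the body, as a standard Young tableau of the body. -/
noncomputable def resBody (T : SYT μ) : SYT (body μ) := by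
  refine ⟨Equiv.ofBijective
    (fun x => ((valSet T).orderIsoOfFin (card_valSet T)).symm ⟨T.1 (sh x), mem_valSet T x⟩)
    ⟨?_, ?_⟩, ?_⟩
  · intro x y h
    have h1 := congrArg ((valSet T).orderIsoOfFin (card_valSet T)) h
    rw [OrderIso.apply_symm_apply, OrderIso.apply_symm_apply] at h1
    have h2 : T.1 (sh x) = T.1 (sh y) := congrArg Subtype.val h1
    exact sh_injective (T.1.injective h2)
  · intro q
    have hmem : ↑((valSet T).orderIsoOfFin (card_valSet T) q) ∈ valSet T :=
      ((valSet T).orderIsoOfFin (card_valSet T) q).2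
    unfold valSet at hmem
    rw [Finset.mem_image] at hmem
    obtain ⟨x, _, hx⟩ := hmem
    refine ⟨x, ?_⟩
    show ((valSet T).orderIsoOfFin (card_valSet T)).symm ⟨T.1 (sh x), mem_valSet T x⟩ = q
    rw [show (⟨T.1 (sh x), mem_valSet T x⟩ : ↥(valSet T))
        = (valSet T).orderIsoOfFin (card_valSet T) q from Subtype.ext hx]
    exact OrderIso.symm_apply_apply _ _
  · intro c₁ c₂ h1 h2 hne
    have hshne : sh c₁ ≠ sh c₂ := fun h => hne (sh_injective h)
    have hlt : T.1 (sh c₁) < T.1 (sh c₂) := by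
      apply T.2 (sh c₁) (sh c₂) _ _ hshne
      · show (c₁ : ℕ × ℕ).1 + 1 ≤ (c₂ : ℕ × ℕ).1 + 1
        omega
      · exact h2
    have hlt' : (⟨T.1 (sh c₁), mem_valSet T c₁⟩ : ↥(valSet T))
        < ⟨T.1 (sh c₂), mem_valSet T c₂⟩ := Subtype.mk_lt_mk.mpr hlt
    exact (OrderIso.lt_iff_lt ((valSet T).orderIsoOfFin (card_valSet T)).symm).mpr hlt'

/-- The "word" of the body values: `q`-th smallest value used in the body. -/
noncomputable def bodyWord (T : SYT μ) : Fin (body μ).cells.card → Fin μ.cells.card :=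
  fun q => ↑((valSet T).orderIsoOfFin (card_valSet T) q)

lemma bodyWord_strictMono (T : SYT μ) : StrictMono (bodyWord T) := by
  intro a b h
  exact Subtype.coe_lt_coe.mpr (((valSet T).orderIsoOfFin (card_valSet T)).strictMono h)

lemma bodyWord_mem (T : SYT μ) (q : Fin (body μ).cells.card) : bodyWord T q ∈ valSet T :=
  ((valSet T).orderIsoOfFin (card_valSet T) q).2

lemma T_eq_bodyWord (T : SYT μ) (x : ↥(body μ).cells) :
    T.1 (sh x) = bodyWord T ((resBody T).1 x) := by
  show T.1 (sh x) = ↑((valSet T).orderIsoOfFin (card_valSet T) ((resBody T).1 x))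
  have : (resBody T).1 x
      = ((valSet T).orderIsoOfFin (card_valSet T)).symm ⟨T.1 (sh x), mem_valSet T x⟩ := rfl
  rw [this, OrderIso.apply_symm_apply]

/-- The row-0 word: value in cell `(0, q)`. -/
noncomputable def rowWord (T : SYT μ) : Fin (μ.rowLen 0) → Fin μ.cells.card :=
  fun q => T.1 ⟨(0, (q : ℕ)), by rw [mem_cells, YoungDiagram.mem_iff_lt_rowLen]; exact q.2⟩

lemma rowWord_strictMono (T : SYT μ) : StrictMono (rowWord T) := by
  intro a b h
  apply T.2 _ _ (le_refl 0) (le_of_lt h)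
  intro hc
  have := congrArg (fun z => (Subtype.val z).2) hc
  simp only at this
  omega

lemma rowWord_mem_compl (T : SYT μ) (q : Fin (μ.rowLen 0)) : rowWord T q ∈ (valSet T)ᶜ := by
  rw [Finset.mem_compl]
  intro hmem
  unfold valSet at hmem
  rw [Finset.mem_image] at hmem
  obtain ⟨x, _, hx⟩ := hmem
  have h1 := T.1.injective hx
  have h2 := congrArg (fun z => (Subtype.val z).1) h1
  simp only [sh] at h2
  omega

lemma card_compl_valSet (T : SYT μ) : ((valSet T)ᶜ).card = μ.rowLen 0 := by
  rw [Finset.card_compl, card_valSet, Fintype.card_fin]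
  have := card_body μ
  omega

end RowSplit

lemma numSYT_le_choose (μ : YoungDiagram) :
    numSYT μ ≤ (μ.cells.card.choose (body μ).cells.card) * numSYT (body μ) := by
  classical
  have hinj : Function.Injective (fun T : SYT μ =>
      ((⟨valSet T, card_valSet T⟩ :
          {s : Finset (Fin μ.cells.card) // s.card = (body μ).cells.card}),
        resBody T)) := by
    intro T T' h
    have hA : valSet T = valSet T' := congrArg (fun p => p.1.1) h
    have hR : resBody T = resBody T' := congrArg Prod.snd h
    have hw : bodyWord T = bodyWord T' := by
      have h1 : bodyWord T = ⇑((valSet T').orderEmbOfFin (card_valSet T')) :=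
        Finset.orderEmbOfFin_unique (card_valSet T')
          (fun q => hA ▸ bodyWord_mem T q) (bodyWord_strictMono T)
      have h2 : bodyWord T' = ⇑((valSet T').orderEmbOfFin (card_valSet T')) :=
        Finset.orderEmbOfFin_unique (card_valSet T')
          (fun q => bodyWord_mem T' q) (bodyWord_strictMono T')
      rw [h1, h2]
    have hu : rowWord T = rowWord T' := by
      have h1 : rowWord T = ⇑(((valSet T')ᶜ).orderEmbOfFin (card_compl_valSet T')) :=
        Finset.orderEmbOfFin_unique (card_compl_valSet T')
          (fun q => hA ▸ rowWord_mem_compl T q) (rowWord_strictMono T)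
      have h2 : rowWord T' = ⇑(((valSet T')ᶜ).orderEmbOfFin (card_compl_valSet T')) :=
        Finset.orderEmbOfFin_unique (card_compl_valSet T')
          (fun q => rowWord_mem_compl T' q) (rowWord_strictMono T')
      rw [h1, h2]
    apply Subtype.ext
    apply Equiv.ext
    intro x
    by_cases hx : (↑x : ℕ × ℕ).1 = 0
    · -- first row
      have hxlt : (↑x : ℕ × ℕ).2 < μ.rowLen 0 := by
        have h1 := x.2
        rw [mem_cells, YoungDiagram.mem_iff_lt_rowLen, hx] at h1
        exact h1
      have hxx : (↑x : ℕ × ℕ) = ((0 : ℕ), (↑x : ℕ × ℕ).2) := Prod.ext hx rfl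
      have e1 : T.1 x = rowWord T ⟨(↑x : ℕ × ℕ).2, hxlt⟩ :=
        congrArg T.1 (Subtype.ext hxx)
      have e2 : T'.1 x = rowWord T' ⟨(↑x : ℕ × ℕ).2, hxlt⟩ :=
        congrArg T'.1 (Subtype.ext hxx)
      rw [e1, e2, hu]
    · -- body
      have hmem : ((↑x : ℕ × ℕ).1 - 1, (↑x : ℕ × ℕ).2) ∈ (body μ).cells := by
        rw [mem_body]
        have hxx : (((↑x : ℕ × ℕ).1 - 1) + 1, (↑x : ℕ × ℕ).2) = (↑x : ℕ × ℕ) := by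
          refine Prod.ext ?_ rfl
          simp only
          omega
        rw [hxx]
        exact x.2
      have hsh : sh ⟨((↑x : ℕ × ℕ).1 - 1, (↑x : ℕ × ℕ).2), hmem⟩ = x := by
        apply Subtype.ext
        refine Prod.ext ?_ rfl
        show (↑x : ℕ × ℕ).1 - 1 + 1 = (↑x : ℕ × ℕ).1
        omega
      have e1 : T.1 x = bodyWord T ((resBody T).1 ⟨((↑x : ℕ × ℕ).1 - 1, (↑x : ℕ × ℕ).2), hmem⟩) :=
        (congrArg T.1 hsh.symm).trans (T_eq_bodyWord T _)
      have e2 : T'.1 x = bodyWord T' ((resBody T').1 ⟨((↑x : ℕ × ℕ).1 - 1, (↑x : ℕ × ℕ).2), hmem⟩) :=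
        (congrArg T'.1 hsh.symm).trans (T_eq_bodyWord T' _)
      rw [e1, e2, hw, hR]
  have hle := Nat.card_le_card_of_injective _ hinj
  rw [numSYT_eq, numSYT_eq]
  refine le_trans hle ?_
  rw [Nat.card_prod]
  have hcard : Nat.card {s : Finset (Fin μ.cells.card) // s.card = (body μ).cells.card}
      = μ.cells.card.choose (body μ).cells.card := by
    rw [Nat.card_eq_fintype_card, Fintype.card_finset_len, Fintype.card_fin]
  rw [hcard]

lemma eq_of_body_eq {lam lam' : YoungDiagram} (h0 : lam.rowLen 0 = lam'.rowLen 0)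
    (hb : body lam = body lam') : lam = lam' := by
  ext x
  show x ∈ lam.cells ↔ x ∈ lam'.cells
  rcases Nat.eq_zero_or_pos x.1 with hx | hx
  · rw [mem_cells, mem_cells, YoungDiagram.mem_iff_lt_rowLen, YoungDiagram.mem_iff_lt_rowLen,
      hx, h0]
  · have hxx : ((x.1 - 1) + 1, x.2) = x := by
      refine Prod.ext ?_ rfl
      simp only
      omega
    have h1 : (x.1 - 1, x.2) ∈ (body lam).cells ↔ ((x.1 - 1) + 1, x.2) ∈ lam.cells :=
      mem_body
    have h2 : (x.1 - 1, x.2) ∈ (body lam').cells ↔ ((x.1 - 1) + 1, x.2) ∈ lam'.cells :=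
      mem_body
    rw [hxx] at h1 h2
    rw [← h1, ← h2, hb]

lemma main_nat (n j : ℕ) (hjn : j ≤ n) (S : Finset YoungDiagram)
    (hS : ∀ μ : YoungDiagram, μ ∈ S → (μ.cells.card = n ∧ μ.rowLen 0 = n - j)) :
    ∑ μ ∈ S, (numSYT μ) ^ 2 ≤ n.choose j ^ 2 * j.factorial := by
  classical
  have hbody : ∀ μ ∈ S, (body μ).cells.card = j := by
    intro μ hμ
    obtain ⟨hc, hr⟩ := hS μ hμ
    have h1 := card_body μ
    omega
  have hstep : ∀ μ ∈ S, numSYT μ ≤ n.choose j * f (body μ) := by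
    intro μ hμ
    obtain ⟨hc, hr⟩ := hS μ hμ
    have h1 := numSYT_le_choose μ
    rw [hc, hbody μ hμ] at h1
    have h2 := numSYT_le_f (body μ).cells.card (body μ) rfl
    exact le_trans h1 (Nat.mul_le_mul_left _ h2)
  have hinj : ∀ x ∈ S, ∀ y ∈ S, body x = body y → x = y := by
    intro x hx y hy hxy
    obtain ⟨hcx, hrx⟩ := hS x hx
    obtain ⟨hcy, hry⟩ := hS y hy
    exact eq_of_body_eq (by rw [hrx, hry]) hxy
  calc ∑ μ ∈ S, (numSYT μ) ^ 2
      ≤ ∑ μ ∈ S, n.choose j ^ 2 * f (body μ) ^ 2 := by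
        apply Finset.sum_le_sum
        intro μ hμ
        calc (numSYT μ) ^ 2 ≤ (n.choose j * f (body μ)) ^ 2 :=
              Nat.pow_le_pow_left (hstep μ hμ) 2
          _ = n.choose j ^ 2 * f (body μ) ^ 2 := by ring
    _ = n.choose j ^ 2 * ∑ μ ∈ S, f (body μ) ^ 2 := by rw [Finset.mul_sum]
    _ ≤ n.choose j ^ 2 * j.factorial := by
        apply Nat.mul_le_mul_left
        have himg : ∑ ν ∈ S.image body, f ν ^ 2 = ∑ μ ∈ S, f (body μ) ^ 2 :=
          Finset.sum_image hinj
        rw [← himg]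
        apply sum_sq_le_factorial j
        intro ν hν
        rw [Finset.mem_image] at hν
        obtain ⟨μ, hμ, rfl⟩ := hν
        exact hbody μ hμ

end SYTAux

/-- For `1 ≤ j ≤ n`,
`∑_{λ ⊢ n, λ₁ = n−j} f_λ² ≤ n^{2j}/j!`, the sum being over all partitions of `n` whose
largest part equals `n − j` (here: the Finset `S` of all Young diagrams with `n` cells and
first row of length `n − j`). -/
theorem sum_sq_numSYT_le
    (n j : ℕ) (hn : 1 ≤ n) (hj : 1 ≤ j) (hjn : j ≤ n)
    (S : Finset YoungDiagram)
    (hS : ∀ μ : YoungDiagram, μ ∈ S ↔ (μ.cells.card = n ∧ μ.rowLen 0 = n - j)) :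
    ∑ μ ∈ S, (numSYT μ : ℝ) ^ 2 ≤ (n : ℝ) ^ (2 * j) / (Nat.factorial j : ℝ) := by
  have hNat := SYTAux.main_nat n j hjn S (fun μ hμ => (hS μ).mp hμ)
  have hNat2 : (n.choose j ^ 2 * j.factorial) * j.factorial ≤ n ^ (2 * j) := by
    have h1 : (n.choose j ^ 2 * j.factorial) * j.factorial
        = (n.choose j * j.factorial) ^ 2 := by ring
    have h2 : n.choose j * j.factorial = n.descFactorial j := by
      rw [Nat.descFactorial_eq_factorial_mul_choose, Nat.mul_comm]
    have h3 : n.descFactorial j ≤ n ^ j := Nat.descFactorial_le_pow _ _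
    calc (n.choose j ^ 2 * j.factorial) * j.factorial
        = (n.choose j * j.factorial) ^ 2 := h1
      _ = (n.descFactorial j) ^ 2 := by rw [h2]
      _ ≤ (n ^ j) ^ 2 := Nat.pow_le_pow_left h3 2
      _ = n ^ (2 * j) := by rw [← pow_mul, Nat.mul_comm]
  have hfac : (0 : ℝ) < (j.factorial : ℝ) := by
    exact_mod_cast j.factorial_pos
  rw [le_div_iff₀ hfac]
  have hcastL : ∑ μ ∈ S, (numSYT μ : ℝ) ^ 2 = ((∑ μ ∈ S, (numSYT μ) ^ 2 : ℕ) : ℝ) := by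
    push_cast
    rfl
  rw [hcastL]
  calc ((∑ μ ∈ S, (numSYT μ) ^ 2 : ℕ) : ℝ) * (j.factorial : ℝ)
      = (((∑ μ ∈ S, (numSYT μ) ^ 2) * j.factorial : ℕ) : ℝ) := by push_cast; ring
    _ ≤ ((n ^ (2 * j) : ℕ) : ℝ) := by
        apply Nat.cast_le.mpr
        calc (∑ μ ∈ S, (numSYT μ) ^ 2) * j.factorial
            ≤ (n.choose j ^ 2 * j.factorial) * j.factorial :=
              Nat.mul_le_mul_right _ hNat
          _ ≤ n ^ (2 * j) := hNat2
    _ = (n : ℝ) ^ (2 * j) := by push_cast; ring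
end
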